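/- arXiv:2010.08637 — 12 statements merged into one kernel-verified Lean document; each statement's English description precedes it below -/
import Mathlib

section
/- For every preference profile P over a candidate set C with a consistent misrepresentation function ρ, and every optimal k-assignment w, the map ŵ defined by letting ŵ(v) be v's most preferred candidate in w(V) is a k-assignment satisfying ŵ(V) ⊆ w(V) and Φ_ρ(P, ŵ) ≤ Φ_ρ(P, w); consequently ŵ is a canonical k-assignment, so a canonical optimal k-assignment always exists. -/
/-! Each voter's most preferred candidate in `w(V)` is ranked no worse than `w(v)`, so by
consistency of `ρ` the dissatisfaction drops voter by voter; and `ŵ(V) ⊆ w(V)` keeps `ŵ` a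
`k`-assignment. -/

theorem le_of_rank_le {α β γ : Type*} [LinearOrder β] [Preorder γ] {rank : α → β}
    (hrank : Function.Injective rank) {f : α → γ} (hf : ∀ a b, rank a < rank b → f a ≤ f b)
    {a b : α} (h : rank a ≤ rank b) : f a ≤ f b := by
  rcases h.lt_or_eq with h | h
  · exact hf a b h
  · rw [hrank h]

theorem stmt0_general {V : Type*} [Fintype V] {m : ℕ}
    (rank : V → Fin m → ℕ)
    (hrank : ∀ v, Function.Injective (rank v))
    (ρ : V → Fin m → ℚ)
    (hcons : ∀ v (c c' : Fin m), rank v c < rank v c' → ρ v c ≤ ρ v c')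
    (k : ℕ)
    (w : V → Fin m)
    (hw_k : (Finset.univ.image w).card ≤ k)
    (hw_opt : ∀ w' : V → Fin m, (Finset.univ.image w').card ≤ k →
      ∑ v, ρ v (w v) ≤ ∑ v, ρ v (w' v))
    (wHat : V → Fin m)
    (hwHat : ∀ v, wHat v ∈ Finset.univ.image w ∧
      ∀ c ∈ Finset.univ.image w, rank v (wHat v) ≤ rank v c) :
    (Finset.univ.image wHat).card ≤ k ∧
    Finset.univ.image wHat ⊆ Finset.univ.image w ∧
    (∑ v, ρ v (wHat v)) ≤ ∑ v, ρ v (w v) ∧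
    ((∀ w' : V → Fin m, (Finset.univ.image w').card ≤ k →
        ∑ v, ρ v (wHat v) ≤ ∑ v, ρ v (w' v)) ∧
      ∀ v, ∀ c ∈ Finset.univ.image wHat, rank v (wHat v) ≤ rank v c) := by
  have hsub : Finset.univ.image wHat ⊆ Finset.univ.image w :=
    Finset.image_subset_iff.mpr fun v _ => (hwHat v).1
  have hsum : ∑ v, ρ v (wHat v) ≤ ∑ v, ρ v (w v) :=
    Finset.sum_le_sum fun v _ => le_of_rank_le (hrank v) (hcons v)
      ((hwHat v).2 (w v) (Finset.mem_image_of_mem w (Finset.mem_univ v)))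
  exact ⟨(Finset.card_le_card hsub).trans hw_k, hsub, hsum,
    fun w' hw' => hsum.trans (hw_opt w' hw'), fun v c hc => (hwHat v).2 c (hsub hc)⟩

/-- transforming an optimal `k`-assignment into a canonical one.
Voters form a finite type `V`, candidates are `Fin m`, and each voter's linear
order is represented by an injective ranking function (lower rank = more
preferred, i.e. `c ≻_v c'` iff `rank v c < rank v c'`). -/
theorem stmt0 {V : Type*} [Fintype V] [DecidableEq V] {m : ℕ}
    (rank : V → Fin m → ℕ)
    (hrank : ∀ v, Function.Injective (rank v))
    (ρ : V → Fin m → ℚ)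
    (hcons : ∀ v (c c' : Fin m), rank v c < rank v c' → ρ v c ≤ ρ v c')
    (k : ℕ)
    (w : V → Fin m)
    (hw_k : (Finset.univ.image w).card ≤ k)
    (hw_opt : ∀ w' : V → Fin m, (Finset.univ.image w').card ≤ k →
      ∑ v, ρ v (w v) ≤ ∑ v, ρ v (w' v))
    (wHat : V → Fin m)
    (hwHat : ∀ v, wHat v ∈ Finset.univ.image w ∧
      ∀ c ∈ Finset.univ.image w, rank v (wHat v) ≤ rank v c) :
    (Finset.univ.image wHat).card ≤ k ∧
    Finset.univ.image wHat ⊆ Finset.univ.image w ∧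
    (∑ v, ρ v (wHat v)) ≤ ∑ v, ρ v (w v) ∧
    ((∀ w' : V → Fin m, (Finset.univ.image w').card ≤ k →
        ∑ v, ρ v (wHat v) ≤ ∑ v, ρ v (w' v)) ∧
      ∀ v, ∀ c ∈ Finset.univ.image wHat, rank v (wHat v) ≤ rank v c) :=
  stmt0_general rank hrank ρ hcons k w hw_k hw_opt wHat hwHat
end

section
/- For every profile P over candidate set C that is single-crossing on a tree T with vertex set V, every k ≤ |C|, and every canonical k-assignment w for P, the assignment w is connected: for every candidate c ∈ C, the inverse image w⁻¹(c) induces a (possibly empty) subtree of T, i.e., a connected subgraph. -/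
/-!
Let `w x = w y = c` and let `u` lie on the path from `x` to `y`. If `w u = c' ≠ c`, then
canonicity gives `c ≻_x c'`, `c' ≻_u c` and `c ≻_y c'`, a forbidden crossing on that path.
So the path from `x` to `y` stays inside `w⁻¹(c)`.
-/

section

variable {V C α : Type*} [LinearOrder α]

theorem rank_lt_of_canonical [Fintype V] [DecidableEq C] {rank : V → C → α}
    (hrank : ∀ v, Function.Injective (rank v)) {w : V → C}
    (hw_can : ∀ v, ∀ c ∈ Finset.univ.image w, rank v (w v) ≤ rank v c)
    (v u : V) (hne : w v ≠ w u) : rank v (w v) < rank v (w u) :=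
  (hw_can v _ (Finset.mem_image_of_mem w (Finset.mem_univ u))).lt_of_ne
    fun h => hne (hrank v h)

namespace SimpleGraph

/-- Preferences are encoded by ranks: `c ≻_v c'` iff `rank v c < rank v c'`. -/
def IsSingleCrossingOn (G : SimpleGraph V) (rank : V → C → α) : Prop :=
  ∀ v₁ v₂ v₃ : V, (∃ p : G.Walk v₁ v₃, p.IsPath ∧ v₂ ∈ p.support) →
    ∀ c c' : C, c ≠ c' →
      ¬(rank v₁ c < rank v₁ c' ∧ rank v₂ c' < rank v₂ c ∧ rank v₃ c < rank v₃ c')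

theorem IsSingleCrossingOn.eq_of_mem_support [Fintype V] [DecidableEq C]
    {G : SimpleGraph V} {rank : V → C → α} (hsc : G.IsSingleCrossingOn rank)
    (hrank : ∀ v, Function.Injective (rank v)) {w : V → C}
    (hw_can : ∀ v, ∀ c ∈ Finset.univ.image w, rank v (w v) ≤ rank v c)
    {x y u : V} (hxy : w x = w y) (p : G.Walk x y) (hp : p.IsPath) (hu : u ∈ p.support) :
    w u = w x := by
  by_contra hne
  have hx_lt := rank_lt_of_canonical hrank hw_can x u (Ne.symm hne)
  have hy_lt := rank_lt_of_canonical hrank hw_can y u (hxy ▸ Ne.symm hne)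
  have hu_lt := rank_lt_of_canonical hrank hw_can u x hne
  exact hsc x u y ⟨p, hp, hu⟩ (w x) (w u) (Ne.symm hne) ⟨hx_lt, hu_lt, hxy ▸ hy_lt⟩

end SimpleGraph

end

theorem stmt1_general {V : Type*} [Fintype V] {m : ℕ}
    (G : SimpleGraph V) (hG : G.IsTree)
    (rank : V → Fin m → ℕ)
    (hrank : ∀ v, Function.Injective (rank v))
    (hsc : ∀ v₁ v₂ v₃ : V, (∃ p : G.Walk v₁ v₃, p.IsPath ∧ v₂ ∈ p.support) →
      ∀ c c' : Fin m, c ≠ c' →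
        ¬(rank v₁ c < rank v₁ c' ∧ rank v₂ c' < rank v₂ c ∧ rank v₃ c < rank v₃ c'))
    (w : V → Fin m)
    (hw_can : ∀ v, ∀ c ∈ Finset.univ.image w, rank v (w v) ≤ rank v c) :
    ∀ c : Fin m, ∀ x y : V, w x = c → w y = c →
      ∃ p : G.Walk x y, ∀ u ∈ p.support, w u = c := by
  rintro c x y rfl hy
  obtain ⟨p, hp, -⟩ := hG.existsUnique_path x y
  exact ⟨p, fun u hu =>
    SimpleGraph.IsSingleCrossingOn.eq_of_mem_support hsc hrank hw_can hy.symm p hp hu⟩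

/-- for preferences single-crossing on a tree, every canonical
`k`-assignment is connected: the preimage of every candidate induces a
(possibly empty) subtree, i.e. any two voters assigned to `c` are joined by a
walk all of whose vertices are assigned to `c`. -/
theorem stmt1 {V : Type*} [Fintype V] [DecidableEq V] {m : ℕ}
    (G : SimpleGraph V) (hG : G.IsTree)
    (rank : V → Fin m → ℕ)
    (hrank : ∀ v, Function.Injective (rank v))
    (hsc : ∀ v₁ v₂ v₃ : V, (∃ p : G.Walk v₁ v₃, p.IsPath ∧ v₂ ∈ p.support) →
      ∀ c c' : Fin m, c ≠ c' →
        ¬(rank v₁ c < rank v₁ c' ∧ rank v₂ c' < rank v₂ c ∧ rank v₃ c < rank v₃ c'))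
    (ρ : V → Fin m → ℚ)
    (hcons : ∀ v (c c' : Fin m), rank v c < rank v c' → ρ v c ≤ ρ v c')
    (k : ℕ) (hk : k ≤ m)
    (w : V → Fin m)
    (hw_k : (Finset.univ.image w).card ≤ k)
    (hw_opt : ∀ w' : V → Fin m, (Finset.univ.image w').card ≤ k →
      ∑ v, ρ v (w v) ≤ ∑ v, ρ v (w' v))
    (hw_can : ∀ v, ∀ c ∈ Finset.univ.image w, rank v (w v) ≤ rank v c) :
    ∀ c : Fin m, ∀ x y : V, w x = c → w y = c →
      ∃ p : G.Walk x y, ∀ u ∈ p.support, w u = c :=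
  stmt1_general G hG rank hrank hsc w hw_can
end

section
/- Let P be a profile over C = [m] that is single-crossing on a tree T, and suppose voter v ranks the candidates as 1 ≻_v 2 ≻_v ⋯ ≻_v m. Then every canonical k-assignment w for P is non-decreasing along every simple path in T starting at v: if x and y are voters on a simple path starting at v with x preceding y, then w(x) ≤ w(y). -/
/-!
If `x` precedes `y` on a path from `v` with `w y < w x`, then `v` prefers `w y` to `w x`, while
canonicity makes `x` prefer `w x` and `y` prefer `w y`. As `x` lies on the path from `v` to `y`,
the pair `w y, w x` would cross twice along that path, contradicting single-crossingness.
-/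

theorem List.mem_left_of_pair_sublist_append {α : Type*} {x y : α} {l₁ l₂ : List α}
    (hd : (l₁ ++ l₂).Nodup) (hy : y ∈ l₁) (h : [x, y].Sublist (l₁ ++ l₂)) : x ∈ l₁ := by
  obtain ⟨r₁, r₂, hr, h₁, h₂⟩ := List.sublist_append_iff.mp h
  rcases r₁ with _ | ⟨a, r⟩
  · rw [List.nil_append] at hr
    exact absurd (h₂.subset (by simp [← hr])) (List.disjoint_of_nodup_append hd hy)
  · rw [List.cons_append, List.cons.injEq] at hr
    exact hr.1 ▸ h₁.subset List.mem_cons_self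

namespace SimpleGraph.Walk

variable {V : Type*} [DecidableEq V] {G : SimpleGraph V}

theorem IsPath.mem_support_takeUntil_of_sublist {u z x y : V} {p : G.Walk u z} (hp : p.IsPath)
    (h : [x, y].Sublist p.support) : x ∈ (p.takeUntil y (h.subset (by simp))).support := by
  have hy : y ∈ p.support := h.subset (by simp)
  have hsplit : p.support = (p.takeUntil y hy).support ++ (p.dropUntil y hy).support.tail := by
    conv_lhs => rw [← take_spec p hy, support_append]
  rw [hsplit] at h
  exact List.mem_left_of_pair_sublist_append (hsplit ▸ hp.support_nodup) (end_mem_support _) h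

end SimpleGraph.Walk

theorem rank_lt_of_forall_rank_le_image {V α β : Type*} [Fintype V] [DecidableEq α] [LinearOrder β]
    {rank : V → α → β} (hrank : ∀ u, Function.Injective (rank u)) {w : V → α}
    (hw : ∀ u, ∀ c ∈ Finset.univ.image w, rank u (w u) ≤ rank u c) {a b : V} (hab : w a ≠ w b) :
    rank a (w a) < rank a (w b) :=
  (hw a (w b) (Finset.mem_image_of_mem w (Finset.mem_univ b))).lt_of_ne
    fun h => hab (hrank a h)

theorem stmt2_general {V : Type*} [Fintype V] [DecidableEq V] {m : ℕ}
    (G : SimpleGraph V)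
    (rank : V → Fin m → ℕ)
    (hrank : ∀ v, Function.Injective (rank v))
    (hsc : ∀ v₁ v₂ v₃ : V, (∃ p : G.Walk v₁ v₃, p.IsPath ∧ v₂ ∈ p.support) →
      ∀ c c' : Fin m, c ≠ c' →
        ¬(rank v₁ c < rank v₁ c' ∧ rank v₂ c' < rank v₂ c ∧ rank v₃ c < rank v₃ c'))
    (v : V) (hv : ∀ c : Fin m, rank v c = (c : ℕ))
    (w : V → Fin m)
    (hw_can : ∀ u, ∀ c ∈ Finset.univ.image w, rank u (w u) ≤ rank u c) :
    ∀ z : V, ∀ p : G.Walk v z, p.IsPath →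
      ∀ x y : V, List.Sublist [x, y] p.support → w x ≤ w y := by
  intro z p hp x y hxy
  by_contra! hlt
  have hv_prefers : rank v (w y) < rank v (w x) := by rw [hv, hv]; exact hlt
  have hx_between : ∃ q : G.Walk v y, q.IsPath ∧ x ∈ q.support :=
    ⟨_, hp.takeUntil _, hp.mem_support_takeUntil_of_sublist hxy⟩
  exact hsc v x y hx_between (w y) (w x) hlt.ne
    ⟨hv_prefers, rank_lt_of_forall_rank_le_image hrank hw_can hlt.ne',
      rank_lt_of_forall_rank_le_image hrank hw_can hlt.ne⟩

/-- for preferences single-crossing on a tree, if voter `v` ranks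
the candidates as `1 ≻ 2 ≻ ⋯ ≻ m` (i.e. its ranking is the identity), then any
canonical `k`-assignment is non-decreasing along every simple path starting
at `v`. -/
theorem stmt2 {V : Type*} [Fintype V] [DecidableEq V] {m k : ℕ}
    (G : SimpleGraph V) (hG : G.IsTree)
    (rank : V → Fin m → ℕ)
    (hrank : ∀ v, Function.Injective (rank v))
    (hsc : ∀ v₁ v₂ v₃ : V, (∃ p : G.Walk v₁ v₃, p.IsPath ∧ v₂ ∈ p.support) →
      ∀ c c' : Fin m, c ≠ c' →
        ¬(rank v₁ c < rank v₁ c' ∧ rank v₂ c' < rank v₂ c ∧ rank v₃ c < rank v₃ c'))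
    (v : V) (hv : ∀ c : Fin m, rank v c = (c : ℕ))
    (ρ : V → Fin m → ℚ)
    (hcons : ∀ u (c c' : Fin m), rank u c < rank u c' → ρ u c ≤ ρ u c')
    (w : V → Fin m)
    (hw_k : (Finset.univ.image w).card ≤ k)
    (hw_opt : ∀ w' : V → Fin m, (Finset.univ.image w').card ≤ k →
      ∑ u, ρ u (w u) ≤ ∑ u, ρ u (w' u))
    (hw_can : ∀ u, ∀ c ∈ Finset.univ.image w, rank u (w u) ≤ rank u c) :
    ∀ z : V, ∀ p : G.Walk v z, p.IsPath →
      ∀ x y : V, List.Sublist [x, y] p.support → w x ≤ w y :=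
  stmt2_general G rank hrank hsc v hv w hw_can
end

section
/- Let P be a profile over C = [m] that is single-crossing with respect to the voter order v₁ ⊲ ⋯ ⊲ v_n, where the first voter ranks the candidates as 1 ≻_{v₁} 2 ≻_{v₁} ⋯ ≻_{v₁} m. Then every canonical k-assignment w_opt for P is monotone: for every pair of voters v_i, v_j with i < j, it holds that w_opt(v_i) ≤ w_opt(v_j). -/
/-!
Suppose voters `i < j` had `w j < w i`. Canonicity makes `i` prefer `w i` to `w j` and `j` prefer
`w j` to `w i`. The first voter ranks candidates by index, so it prefers `w j` to `w i`; for
`0 < i` the preferences of the voters `0 < i < j` on this pair then cross twice, and for `i = 0`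
they contradict the first voter's ranking directly.
-/

open Finset Function

variable {ι α β : Type*} [PartialOrder ι] [LinearOrder β]

def SingleCrossing (rank : ι → α → β) : Prop :=
  ∀ i j l : ι, i < j → j < l → ∀ c c' : α, c ≠ c' →
    ¬(rank i c < rank i c' ∧ rank j c' < rank j c ∧ rank l c < rank l c')

theorem SingleCrossing.rank_lt_of_le {rank : ι → α → β} (hsc : SingleCrossing rank)
    (hrank : ∀ v, Injective (rank v)) {l i j : ι} (hli : l ≤ i) (hij : i < j) {c c' : α}
    (hi : rank i c < rank i c') (hj : rank j c' < rank j c) : rank l c < rank l c' := by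
  obtain hli | rfl := hli.lt_or_eq
  · have hne : c ≠ c' := by rintro rfl; exact hi.false
    exact ((hrank l).ne hne |>.lt_or_gt).resolve_right
      fun hl => hsc l i j hli hij c' c hne.symm ⟨hl, hi, hj⟩
  · exact hi

theorem stmt3_general {n m : ℕ} (hn : 0 < n)
    (rank : Fin n → Fin m → ℕ)
    (hrank : ∀ v, Function.Injective (rank v))
    (hsc : ∀ i j l : Fin n, i < j → j < l → ∀ c c' : Fin m, c ≠ c' →
      ¬(rank i c < rank i c' ∧ rank j c' < rank j c ∧ rank l c < rank l c'))
    (hfirst : ∀ c : Fin m, rank ⟨0, hn⟩ c = (c : ℕ))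
    (w : Fin n → Fin m)
    (hw_can : ∀ v, ∀ c ∈ Finset.univ.image w, rank v (w v) ≤ rank v c) :
    ∀ i j : Fin n, i < j → w i ≤ w j := by
  intro i j hij
  by_contra! h
  have hmem (v : Fin n) : w v ∈ univ.image w := mem_image_of_mem w (mem_univ v)
  have hi : rank i (w i) < rank i (w j) := (hw_can i _ (hmem j)).lt_of_ne ((hrank i).ne h.ne')
  have hj : rank j (w j) < rank j (w i) := (hw_can j _ (hmem i)).lt_of_ne ((hrank j).ne h.ne)
  have h0i : (⟨0, hn⟩ : Fin n) ≤ i := Nat.zero_le i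
  have hfirst_lt := SingleCrossing.rank_lt_of_le hsc hrank h0i hij hi hj
  rw [hfirst, hfirst] at hfirst_lt
  exact h.not_gt hfirst_lt

/-- for preferences single-crossing on a line (voters `v_1 ⊲ ⋯ ⊲ v_n`,
indexed by `Fin n`), where the first voter ranks the candidates as
`1 ≻ 2 ≻ ⋯ ≻ m`, every canonical `k`-assignment is monotone. -/
theorem stmt3 {n m k : ℕ} (hn : 0 < n)
    (rank : Fin n → Fin m → ℕ)
    (hrank : ∀ v, Function.Injective (rank v))
    (hsc : ∀ i j l : Fin n, i < j → j < l → ∀ c c' : Fin m, c ≠ c' →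
      ¬(rank i c < rank i c' ∧ rank j c' < rank j c ∧ rank l c < rank l c'))
    (hfirst : ∀ c : Fin m, rank ⟨0, hn⟩ c = (c : ℕ))
    (ρ : Fin n → Fin m → ℚ)
    (hcons : ∀ v (c c' : Fin m), rank v c < rank v c' → ρ v c ≤ ρ v c')
    (w : Fin n → Fin m)
    (hw_k : (Finset.univ.image w).card ≤ k)
    (hw_opt : ∀ w' : Fin n → Fin m, (Finset.univ.image w').card ≤ k →
      ∑ v, ρ v (w v) ≤ ∑ v, ρ v (w' v))
    (hw_can : ∀ v, ∀ c ∈ Finset.univ.image w, rank v (w v) ≤ rank v c) :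
    ∀ i j : Fin n, i < j → w i ≤ w j :=
  stmt3_general hn rank hrank hsc hfirst w hw_can
end

section
/- Let P be a profile over C = [m] with voters v₁, …, v_n that is single-crossing with respect to the order v₁ ⊲ ⋯ ⊲ v_n, let ρ be a misrepresentation function consistent with P, and let k ≤ min{n, m}. Define ω(i,j) = min_{c∈C} Σ_{ℓ=i+1}^{j} ρ(v_ℓ, c) for 0 ≤ i < j ≤ n. Then the minimum over all sequences 0 = a₀ < a₁ < ⋯ < a_k = n of Σ_{t=1}^{k} ω(a_{t−1}, a_t) equals the minimum of Φ_ρ(P,w) over all k-assignments w. -/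
/-!
A `k`-link path yields a `k`-assignment of the same cost: serve each link by a candidate
attaining `ω` on it. Conversely, let every voter of a `k`-assignment `w` switch to her
favourite among the candidates used by `w`; by consistency this does not increase the cost,
and by single-crossing the voters of each candidate now form an interval. Cutting at the
interval boundaries, and further inside the intervals where needed (possible since `k ≤ n`),
gives a `k`-link path on each link of which the new assignment is constant, so the cost of
the path is at most that of `w`.
-/

/-- The weight `ω(i,j)`: the minimum over candidates `c` of the total
dissatisfaction of voters `v_{i+1}, …, v_j` (0-indexed: voters with indices in
`[i, j)`) when all of them are represented by `c`. -/
noncomputable def omegaFn {C : Type*} [Fintype C] [Nonempty C] {n : ℕ}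
    (ρ : Fin n → C → ℚ) (i j : ℕ) : ℚ :=
  Finset.univ.inf' Finset.univ_nonempty fun c : C =>
    ∑ l ∈ Finset.Ico i j, if h : l < n then ρ ⟨l, h⟩ c else 0

open Finset Function

namespace SingleCrossing

variable {C β : Type*} [LinearOrder β] {n : ℕ}

noncomputable def costAt (ρ : Fin n → C → ℚ) (l : ℕ) (c : C) : ℚ :=
  if h : l < n then ρ ⟨l, h⟩ c else 0

theorem sum_range_costAt (ρ : Fin n → C → ℚ) (f : ℕ → C) :
    ∑ l ∈ range n, costAt ρ l (f l) = ∑ v : Fin n, ρ v (f v) := by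
  rw [← Fin.sum_univ_eq_sum_range (fun l => costAt ρ l (f l))]
  simp [costAt]

def IsLinkPath (k i j : ℕ) (a : ℕ → ℕ) : Prop :=
  a 0 = i ∧ a k = j ∧ ∀ t < k, a t < a (t + 1)

def consPath (i : ℕ) (b : ℕ → ℕ) : ℕ → ℕ
  | 0 => i
  | t + 1 => b t

namespace IsLinkPath

variable {k i j : ℕ} {a : ℕ → ℕ}

theorem tail (h : IsLinkPath (k + 1) i j a) : IsLinkPath k (a 1) j fun t => a (t + 1) :=
  ⟨rfl, h.2.1, fun t _ => h.2.2 (t + 1) (by omega)⟩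

theorem cons {i' : ℕ} (h : IsLinkPath k i' j a) (hi : i < i') :
    IsLinkPath (k + 1) i j (consPath i a) := by
  refine ⟨rfl, h.2.1, fun t ht => ?_⟩
  cases t with
  | zero => show i < a 0; exact h.1.symm ▸ hi
  | succ t => exact h.2.2 t (by omega)

theorem lt_one (h : IsLinkPath (k + 1) i j a) : i < a 1 :=
  h.1 ▸ h.2.2 0 k.succ_pos

theorem le (h : IsLinkPath k i j a) : i ≤ j := by
  induction k generalizing i a with
  | zero => exact (h.1.symm.trans h.2.1).le
  | succ k ih => exact h.lt_one.le.trans (ih h.tail)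

end IsLinkPath

theorem exists_isLinkPath {k i j : ℕ} (hk : 0 < k) (h : i + k ≤ j) : ∃ a, IsLinkPath k i j a :=
  ⟨fun t => if t < k then i + t else j, by simp [hk], by simp, fun t _ => by
    dsimp only; split_ifs <;> omega⟩

def IsConstOnLinks (f : ℕ → C) (k : ℕ) (a : ℕ → ℕ) : Prop :=
  ∀ t < k, ∀ l ∈ Ico (a t) (a (t + 1)), f l = f (a t)

namespace IsConstOnLinks

variable {f : ℕ → C} {k i : ℕ} {b : ℕ → ℕ}

theorem tail (h : IsConstOnLinks f (k + 1) b) : IsConstOnLinks f k fun t => b (t + 1) :=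
  fun t _ => h (t + 1) (by omega)

theorem cons (h : IsConstOnLinks f k b) (h0 : b 0 = i + 1) :
    IsConstOnLinks f (k + 1) (consPath i b) := by
  rintro (_ | t) ht l hl
  · obtain rfl : l = i := by
      simp only [consPath, mem_Ico] at hl
      omega
    rfl
  · exact h t (by omega) l hl

theorem cons_tail (h : IsConstOnLinks f (k + 1) b) (h0 : b 0 = i + 1) (hfi : f (i + 1) = f i) :
    IsConstOnLinks f (k + 1) (consPath i fun t => b (t + 1)) := by
  rintro (_ | t) ht l hl
  · simp only [consPath, mem_Ico] at hl ⊢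
    rcases eq_or_lt_of_le hl.1 with rfl | hil
    · rfl
    · rw [h 0 k.succ_pos l (mem_Ico.2 ⟨by omega, hl.2⟩), h0, hfi]
  · exact h.tail t (by omega) l hl

end IsConstOnLinks

theorem apply_succ_eq_of_card_image_Ico_le [DecidableEq C] {f : ℕ → C}
    (hf : ∀ c, {l | l < n ∧ f l = c}.OrdConnected) {i : ℕ} (hi : i < n)
    (hcard : ((Ico i n).image f).card ≤ ((Ico (i + 1) n).image f).card) : f (i + 1) = f i := by
  have hmem : f i ∈ (Ico (i + 1) n).image f := by
    by_contra hnot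
    rw [← insert_Ico_add_one_left_eq_Ico hi, image_insert, card_insert_of_notMem hnot] at hcard
    omega
  obtain ⟨j, hj, hfj⟩ := mem_image.1 hmem
  rw [mem_Ico] at hj
  exact ((hf (f i)).out ⟨hi, rfl⟩ ⟨hj.2, hfj⟩ ⟨by omega, hj.1⟩).2

theorem exists_isLinkPath_isConstOnLinks [DecidableEq C] {f : ℕ → C}
    (hf : ∀ c, {l | l < n ∧ f l = c}.OrdConnected) {k i : ℕ} (hkn : i + k ≤ n)
    (hcard : ((Ico i n).image f).card ≤ k) :
    ∃ a, IsLinkPath k i n a ∧ IsConstOnLinks f k a := by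
  obtain ⟨d, hd⟩ : ∃ d, n - i = d := ⟨_, rfl⟩
  induction d generalizing i k with
  | zero =>
    obtain ⟨rfl, rfl⟩ : k = 0 ∧ i = n := by omega
    exact ⟨fun _ => i, ⟨rfl, rfl, by simp⟩, by simp [IsConstOnLinks]⟩
  | succ d ih =>
    have hi : i < n := by omega
    have hsub : (Ico (i + 1) n).image f ⊆ (Ico i n).image f :=
      image_subset_image (Ico_subset_Ico_left i.le_succ)
    cases k with
    | zero =>
      rw [← insert_Ico_add_one_left_eq_Ico hi, image_insert] at hcard
      simp at hcard
    | succ k =>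
      by_cases hsmall : ((Ico (i + 1) n).image f).card ≤ k
      · -- a link consisting of voter `i` alone
        obtain ⟨b, hb, hfb⟩ := ih (by omega) hsmall (by omega)
        exact ⟨consPath i b, hb.cons (by omega), hfb.cons hb.1⟩
      · -- voter `i` joins the first link of a path from `i + 1`
        have hfi := apply_succ_eq_of_card_image_Ico_le hf hi (by omega)
        have hlen : i + 1 + (k + 1) ≤ n := by
          have := card_image_le (s := Ico (i + 1) n) (f := f)
          rw [Nat.card_Ico] at this
          omega
        obtain ⟨b, hb, hfb⟩ := ih hlen ((card_le_card hsub).trans hcard) (by omega)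
        exact ⟨consPath i fun t => b (t + 1), hb.tail.cons (by have := hb.lt_one; omega),
          hfb.cons_tail hb.1 hfi⟩

def IsSingleCrossing (rank : Fin n → C → β) : Prop :=
  ∀ i j l : Fin n, i < j → j < l → ∀ c c' : C, c ≠ c' →
    ¬(rank i c < rank i c' ∧ rank j c' < rank j c ∧ rank l c < rank l c')

theorem IsSingleCrossing.ordConnected_setOf_favourite {rank : Fin n → C → β}
    (hsc : IsSingleCrossing rank) (hrank : ∀ v, Injective (rank v)) {D : Set C}
    {f : ℕ → C} (hf : ∀ l (hl : l < n), f l ∈ D ∧ ∀ c ∈ D, rank ⟨l, hl⟩ (f l) ≤ rank ⟨l, hl⟩ c)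
    (c : C) : {l | l < n ∧ f l = c}.OrdConnected := by
  have hlt : ∀ l (hl : l < n), ∀ c ∈ D, c ≠ f l → rank ⟨l, hl⟩ (f l) < rank ⟨l, hl⟩ c :=
    fun l hl c hc hne => ((hf l hl).2 c hc).lt_of_ne fun h => hne (hrank _ h).symm
  refine ⟨fun x ⟨hx, hxc⟩ y ⟨hy, hyc⟩ l ⟨hxl, hly⟩ => ?_⟩
  have hl : l < n := hly.trans_lt hy
  refine ⟨hl, by_contra fun hne => ?_⟩
  subst hxc
  have hxl' : x < l := hxl.lt_of_ne (by rintro rfl; exact hne rfl)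
  have hly' : l < y := hly.lt_of_ne (by rintro rfl; exact hne hyc)
  exact hsc ⟨x, hx⟩ ⟨l, hl⟩ ⟨y, hy⟩ hxl' hly' (f x) (f l) (Ne.symm hne)
    ⟨hlt x hx _ (hf l hl).1 hne, hlt l hl _ (hf x hx).1 (Ne.symm hne),
      hyc ▸ hlt y hy _ (hf l hl).1 (hyc ▸ hne)⟩

section Cost

variable [Fintype C] [Nonempty C]

theorem omegaFn_le_sum (ρ : Fin n → C → ℚ) (i j : ℕ) (c : C) :
    omegaFn ρ i j ≤ ∑ l ∈ Ico i j, costAt ρ l c :=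
  inf'_le _ (mem_univ c)

theorem exists_omegaFn_eq_sum (ρ : Fin n → C → ℚ) (i j : ℕ) :
    ∃ c, omegaFn ρ i j = ∑ l ∈ Ico i j, costAt ρ l c := by
  obtain ⟨c, -, hc⟩ := exists_mem_eq_inf' univ_nonempty fun c : C => ∑ l ∈ Ico i j, costAt ρ l c
  exact ⟨c, hc⟩

noncomputable def pathCost (ρ : Fin n → C → ℚ) (k : ℕ) (a : ℕ → ℕ) : ℚ :=
  ∑ t ∈ range k, omegaFn ρ (a t) (a (t + 1))

theorem pathCost_succ (ρ : Fin n → C → ℚ) (k : ℕ) (a : ℕ → ℕ) :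
    pathCost ρ (k + 1) a = omegaFn ρ (a 0) (a 1) + pathCost ρ k fun t => a (t + 1) := by
  rw [pathCost, sum_range_succ', add_comm]
  rfl

theorem pathCost_zero (ρ : Fin n → C → ℚ) (a : ℕ → ℕ) : pathCost ρ 0 a = 0 :=
  sum_range_zero _

theorem IsLinkPath.pathCost_le (ρ : Fin n → C → ℚ) {f : ℕ → C}
    {k i j : ℕ} {a : ℕ → ℕ} (h : IsLinkPath k i j a) (hf : IsConstOnLinks f k a) :
    pathCost ρ k a ≤ ∑ l ∈ Ico i j, costAt ρ l (f l) := by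
  induction k generalizing i a with
  | zero =>
    obtain rfl : i = j := h.1.symm.trans h.2.1
    simp [pathCost_zero]
  | succ k ih =>
    rw [pathCost_succ, ← sum_Ico_consecutive _ h.lt_one.le h.tail.le, h.1]
    refine add_le_add ((omegaFn_le_sum ρ i (a 1) (f i)).trans_eq
      (sum_congr rfl fun l hl => ?_)) (ih h.tail hf.tail)
    rw [hf 0 k.succ_pos l (h.1 ▸ hl), h.1]

variable [DecidableEq C]

theorem IsLinkPath.exists_sum_costAt_eq (ρ : Fin n → C → ℚ) {k i j : ℕ} {a : ℕ → ℕ}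
    (h : IsLinkPath k i j a) :
    ∃ f : ℕ → C, ((Ico i j).image f).card ≤ k ∧
      ∑ l ∈ Ico i j, costAt ρ l (f l) = pathCost ρ k a := by
  induction k generalizing i a with
  | zero =>
    obtain rfl : i = j := h.1.symm.trans h.2.1
    exact ⟨fun _ => Classical.arbitrary C, by simp, by simp [pathCost_zero]⟩
  | succ k ih =>
    obtain ⟨f, hcard, hsum⟩ := ih h.tail
    obtain ⟨c, hc⟩ := exists_omegaFn_eq_sum ρ (a 0) (a 1)
    have hi := h.lt_one
    have hj := h.tail.le
    refine ⟨fun l => if l < a 1 then c else f l, ?_, ?_⟩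
    · have hsub : (Ico i j).image (fun l => if l < a 1 then c else f l) ⊆
          insert c ((Ico (a 1) j).image f) := by
        intro x hx
        simp only [mem_image, mem_Ico, mem_insert] at hx ⊢
        obtain ⟨l, hl, rfl⟩ := hx
        split_ifs with hla
        · exact Or.inl rfl
        · exact Or.inr ⟨l, ⟨by omega, hl.2⟩, rfl⟩
      exact (card_le_card hsub).trans ((card_insert_le _ _).trans (by omega))
    · rw [pathCost_succ, ← hsum, hc, h.1, ← sum_Ico_consecutive _ hi.le hj]
      congr 1 <;> refine sum_congr rfl fun l hl => ?_ <;> rw [mem_Ico] at hl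
      · simp only [if_pos hl.2]
      · simp only [if_neg (show ¬l < a 1 by omega)]

theorem IsLinkPath.exists_assignment (ρ : Fin n → C → ℚ) {k : ℕ} {a : ℕ → ℕ}
    (h : IsLinkPath k 0 n a) :
    ∃ w : Fin n → C, (univ.image w).card ≤ k ∧ ∑ v, ρ v (w v) = pathCost ρ k a := by
  obtain ⟨f, hcard, hsum⟩ := h.exists_sum_costAt_eq ρ
  refine ⟨fun v => f v, (card_le_card ?_).trans hcard, ?_⟩
  · intro x hx
    obtain ⟨v, -, rfl⟩ := mem_image.1 hx
    exact mem_image_of_mem f (mem_Ico.2 ⟨v.val.zero_le, v.isLt⟩)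
  · rw [← sum_range_costAt, range_eq_Ico, hsum]

theorem exists_isLinkPath_pathCost_le {k : ℕ} (hkn : k ≤ n) {rank : Fin n → C → β}
    (hrank : ∀ v, Injective (rank v)) (hsc : IsSingleCrossing rank) {ρ : Fin n → C → ℚ}
    (hcons : ∀ v c c', rank v c < rank v c' → ρ v c ≤ ρ v c') (w : Fin n → C)
    (hw : (univ.image w).card ≤ k) :
    ∃ a, IsLinkPath k 0 n a ∧ pathCost ρ k a ≤ ∑ v, ρ v (w v) := by
  set D := univ.image w
  have hfav : ∀ l, ∃ c, ∀ hl : l < n, c ∈ D ∧ ∀ c' ∈ D, rank ⟨l, hl⟩ c ≤ rank ⟨l, hl⟩ c' := by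
    intro l
    by_cases hl : l < n
    · obtain ⟨c, hc, hmin⟩ :=
        D.exists_min_image (rank ⟨l, hl⟩) ⟨w ⟨l, hl⟩, mem_image_of_mem w (mem_univ _)⟩
      exact ⟨c, fun _ => ⟨hc, hmin⟩⟩
    · exact ⟨Classical.arbitrary C, fun h => absurd h hl⟩
  choose f hf using hfav
  have hcard : ((Ico 0 n).image f).card ≤ k :=
    (card_le_card (image_subset_iff.2 fun l hl => (hf l (mem_Ico.1 hl).2).1)).trans hw
  obtain ⟨a, ha, hfa⟩ :=
    exists_isLinkPath_isConstOnLinks (hsc.ordConnected_setOf_favourite hrank hf) (by omega) hcard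
  have hle : ∀ v : Fin n, ρ v (f v) ≤ ρ v (w v) := by
    intro v
    rcases ((hf v v.isLt).2 (w v) (mem_image_of_mem w (mem_univ v))).lt_or_eq with h | h
    · exact hcons v _ _ h
    · rw [hrank v h]
  refine ⟨a, ha, ?_⟩
  calc pathCost ρ k a ≤ ∑ l ∈ range n, costAt ρ l (f l) := by
        rw [range_eq_Ico]; exact ha.pathCost_le ρ hfa
    _ = ∑ v, ρ v (f v) := sum_range_costAt ρ f
    _ ≤ ∑ v, ρ v (w v) := sum_le_sum fun v _ => hle v

end Cost

end SingleCrossing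

theorem exists_isLeast_isLeast_of_subset {α : Type*} [LinearOrder α] {P A : Set α}
    (hA : A.Finite) (hP : P.Nonempty) (hPA : P ⊆ A) (hAP : ∀ x ∈ A, ∃ y ∈ P, y ≤ x) :
    ∃ μ, IsLeast P μ ∧ IsLeast A μ := by
  obtain ⟨μ, hμA, hμ⟩ := Set.exists_min_image A id hA (hP.mono hPA)
  obtain ⟨y, hyP, hyμ⟩ := hAP μ hμA
  obtain rfl := hyμ.antisymm (hμ y (hPA hyP))
  exact ⟨y, ⟨hyP, fun x hx => hμ x (hPA hx)⟩, hμA, hμ⟩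

open SingleCrossing

theorem stmt4_general {n k : ℕ} {C : Type*} [Fintype C] [Nonempty C] [DecidableEq C]
    (hk : 0 < k) (hkn : k ≤ n)
    (rank : Fin n → C → ℕ)
    (hrank : ∀ v, Function.Injective (rank v))
    (hsc : ∀ i j l : Fin n, i < j → j < l → ∀ c c' : C, c ≠ c' →
      ¬(rank i c < rank i c' ∧ rank j c' < rank j c ∧ rank l c < rank l c'))
    (ρ : Fin n → C → ℚ)
    (hcons : ∀ v (c c' : C), rank v c < rank v c' → ρ v c ≤ ρ v c') :
    ∃ μ : ℚ,
      IsLeast {x : ℚ | ∃ a : ℕ → ℕ, a 0 = 0 ∧ a k = n ∧ (∀ t < k, a t < a (t + 1)) ∧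
        x = ∑ t ∈ Finset.range k, omegaFn ρ (a t) (a (t + 1))} μ ∧
      IsLeast {x : ℚ | ∃ w : Fin n → C, (Finset.univ.image w).card ≤ k ∧
        x = ∑ v, ρ v (w v)} μ := by
  refine exists_isLeast_isLeast_of_subset ?_ ?_ ?_ ?_
  · exact (Set.finite_range fun w : Fin n → C => ∑ v, ρ v (w v)).subset
      fun x ⟨w, _, hx⟩ => ⟨w, hx.symm⟩
  · obtain ⟨a, ha0, hak, ha⟩ := exists_isLinkPath hk (by omega : 0 + k ≤ n)
    exact ⟨_, a, ha0, hak, ha, rfl⟩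
  · rintro _ ⟨a, ha0, hak, ha, rfl⟩
    obtain ⟨w, hw, hsum⟩ := IsLinkPath.exists_assignment ρ ⟨ha0, hak, ha⟩
    exact ⟨w, hw, hsum.symm⟩
  · rintro _ ⟨w, hw, rfl⟩
    obtain ⟨a, ⟨ha0, hak, ha⟩, hle⟩ := exists_isLinkPath_pathCost_le hkn hrank hsc hcons w hw
    exact ⟨_, ⟨a, ha0, hak, ha, rfl⟩, hle⟩

/-- for single-crossing preferences, the minimum cost of a
`k`-link `0`–`n` path with respect to `ω` equals the minimum total
dissatisfaction over all `k`-assignments. -/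
theorem stmt4 {n k : ℕ} {C : Type*} [Fintype C] [Nonempty C] [DecidableEq C]
    (hk : 0 < k) (hkn : k ≤ n) (hkm : k ≤ Fintype.card C)
    (rank : Fin n → C → ℕ)
    (hrank : ∀ v, Function.Injective (rank v))
    (hsc : ∀ i j l : Fin n, i < j → j < l → ∀ c c' : C, c ≠ c' →
      ¬(rank i c < rank i c' ∧ rank j c' < rank j c ∧ rank l c < rank l c'))
    (ρ : Fin n → C → ℚ)
    (hcons : ∀ v (c c' : C), rank v c < rank v c' → ρ v c ≤ ρ v c') :
    ∃ μ : ℚ,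
      IsLeast {x : ℚ | ∃ a : ℕ → ℕ, a 0 = 0 ∧ a k = n ∧ (∀ t < k, a t < a (t + 1)) ∧
        x = ∑ t ∈ Finset.range k, omegaFn ρ (a t) (a (t + 1))} μ ∧
      IsLeast {x : ℚ | ∃ w : Fin n → C, (Finset.univ.image w).card ≤ k ∧
        x = ∑ v, ρ v (w v)} μ :=
  stmt4_general hk hkn rank hrank hsc ρ hcons
end

section
/- Suppose that for every three-voter profile (≻_x, ≻_y, ≻_z) over a candidate set C that is single-crossing with respect to the order x ⊲ y ⊲ z, and every misrepresentation function ρ' consistent with it, the inequality min_c(ρ'(x,c)+ρ'(y,c)) + min_c(ρ'(y,c)+ρ'(z,c)) ≤ min_c(ρ'(x,c)+ρ'(y,c)+ρ'(z,c)) + min_c ρ'(y,c) holds. Then for every n-voter profile over C single-crossing with respect to v₁ ⊲ ⋯ ⊲ v_n with a consistent misrepresentation function ρ, the weight function ω(i,j) = min_{c∈C} Σ_{ℓ=i+1}^{j} ρ(v_ℓ, c) satisfies the concave Monge property: ω(i,j) + ω(i+1,j+1) ≤ ω(i,j+1) + ω(i+1,j) for all i, j with 0 < i+1 < j < n. -/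
/-!
Fix `i + 1 < j` and merge the voters strictly between `v_i` and `v_j` into one middle voter
with dissatisfaction `σ = ∑_{i < l < j} ρ(v_l, ·)`. Then the four weights in the Monge inequality
are the four minima of the three-voter inequality for `(ρ(v_i, ·), σ, ρ(v_j, ·))`. It remains to
order the candidates for the merged voter. By single-crossing, whenever `v_i` and `v_j` both prefer
`c` to `c'`, so does every voter between them, hence `σ c ≤ σ c'`. Ranking candidates
lexicographically by `(σ, rank of v_i)` is therefore consistent with `σ`, and it is single-crossing
between `v_i` and `v_j`.
-/

open Finset

lemma card_filter_lt_lt_card_filter_lt_iff {α β : Type*} [Fintype α] [LinearOrder β]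
    (f : α → β) (a b : α) :
    #{d | f d < f a} < #{d | f d < f b} ↔ f a < f b := by
  constructor
  · contrapose!
    intro hba
    exact card_le_card (monotone_filter_right _ fun _ _ hd => hd.trans_le hba)
  · intro hab
    refine card_lt_card ⟨monotone_filter_right _ fun _ _ hd => hd.trans hab, fun hsub => ?_⟩
    exact (mem_filter.1 (hsub (mem_filter.2 ⟨mem_univ a, hab⟩))).2.false

lemma exists_ranking_between {C : Type*} [Fintype C] (rx rz : C → ℕ)
    (hrx : Function.Injective rx) (σ : C → ℚ)
    (hσ : ∀ c c', rx c < rx c' → rz c < rz c' → σ c ≤ σ c') :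
    ∃ ry : C → ℕ, Function.Injective ry ∧
      (∀ c c', ¬(rx c < rx c' ∧ ry c' < ry c ∧ rz c < rz c')) ∧
      ∀ c c', ry c < ry c' → σ c ≤ σ c' := by
  let key : C → ℚ ×ₗ ℕ := fun c => toLex (σ c, rx c)
  have hkey : Function.Injective key := fun c c' h => hrx congr((ofLex $h).2)
  let ry : C → ℕ := fun c => #{d | key d < key c}
  have hry (c c') : ry c < ry c' ↔ key c < key c' := card_filter_lt_lt_card_filter_lt_iff key c c'
  refine ⟨ry, fun c c' h => hkey ?_, ?_,
    fun c c' h => (Prod.Lex.toLex_lt_toLex'.1 ((hry c c').1 h)).1⟩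
  · exact le_antisymm (not_lt.1 fun hlt => ((hry c' c).2 hlt).ne' h)
      (not_lt.1 fun hlt => ((hry c c').2 hlt).ne h)
  · rintro c c' ⟨hx, hy, hz⟩
    obtain ⟨hσ_le, hrx_lt⟩ := Prod.Lex.toLex_lt_toLex'.1 ((hry c' c).1 hy)
    exact (hrx_lt (le_antisymm hσ_le (hσ c c' hx hz))).not_gt hx

section Segments

variable {C : Type*} {n : ℕ}

noncomputable def segmentSum (ρ : Fin n → C → ℚ) (i j : ℕ) (c : C) : ℚ :=
  ∑ l ∈ Ico i j, if h : l < n then ρ ⟨l, h⟩ c else 0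

lemma omegaFn_eq_inf'_segmentSum [Fintype C] [Nonempty C] (ρ : Fin n → C → ℚ) (i j : ℕ) :
    omegaFn ρ i j = univ.inf' univ_nonempty (segmentSum ρ i j) :=
  rfl

lemma segmentSum_eq_add_succ_bot (ρ : Fin n → C → ℚ) {i j : ℕ} (hij : i < j) (hi : i < n)
    (c : C) : segmentSum ρ i j c = ρ ⟨i, hi⟩ c + segmentSum ρ (i + 1) j c := by
  rw [segmentSum, sum_eq_sum_Ico_succ_bot hij, dif_pos hi, segmentSum]

lemma segmentSum_succ_top (ρ : Fin n → C → ℚ) {i j : ℕ} (hij : i ≤ j) (hj : j < n) (c : C) :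
    segmentSum ρ i (j + 1) c = segmentSum ρ i j c + ρ ⟨j, hj⟩ c := by
  rw [segmentSum, sum_Ico_succ_top hij, dif_pos hj, segmentSum]

end Segments

section SingleCrossing

variable {C : Type*} {n : ℕ} {rank : Fin n → C → ℕ}

lemma rank_lt_of_between (hrank : ∀ v, Function.Injective (rank v))
    (hsc : ∀ i j l : Fin n, i < j → j < l → ∀ c c' : C, c ≠ c' →
      ¬(rank i c < rank i c' ∧ rank j c' < rank j c ∧ rank l c < rank l c'))
    {i l j : Fin n} (hil : i < l) (hlj : l < j) {c c' : C}
    (hi : rank i c < rank i c') (hj : rank j c < rank j c') : rank l c < rank l c' := by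
  have hne : c ≠ c' := ne_of_apply_ne (rank i) hi.ne
  by_contra! hl
  exact hsc i l j hil hlj c c' hne
    ⟨hi, hl.lt_of_ne fun h => hne (hrank l h).symm, hj⟩

lemma segmentSum_le_of_between (hrank : ∀ v, Function.Injective (rank v))
    (hsc : ∀ i j l : Fin n, i < j → j < l → ∀ c c' : C, c ≠ c' →
      ¬(rank i c < rank i c' ∧ rank j c' < rank j c ∧ rank l c < rank l c'))
    {ρ : Fin n → C → ℚ} (hcons : ∀ v (c c' : C), rank v c < rank v c' → ρ v c ≤ ρ v c')
    {i j : Fin n} {c c' : C} (hi : rank i c < rank i c') (hj : rank j c < rank j c') :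
    segmentSum ρ (i + 1) j c ≤ segmentSum ρ (i + 1) j c' := by
  refine sum_le_sum fun l hl => ?_
  rw [mem_Ico] at hl
  have hln : l < n := hl.2.trans j.2
  rw [dif_pos hln, dif_pos hln]
  exact hcons _ _ _
    (rank_lt_of_between hrank hsc (l := ⟨l, hln⟩) (Fin.lt_def.2 hl.1) (Fin.lt_def.2 hl.2) hi hj)

end SingleCrossing

/-- if every three-voter single-crossing instance satisfies the
concave Monge inequality, then the weight function `ω` of every `n`-voter
single-crossing instance satisfies the concave Monge property. -/
theorem stmt5 {C : Type*} [Fintype C] [Nonempty C]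
    (h3 : ∀ (rx ry rz : C → ℕ),
      Function.Injective rx → Function.Injective ry → Function.Injective rz →
      (∀ c c' : C, c ≠ c' → ¬(rx c < rx c' ∧ ry c' < ry c ∧ rz c < rz c')) →
      ∀ (ρx ρy ρz : C → ℚ),
        (∀ c c' : C, rx c < rx c' → ρx c ≤ ρx c') →
        (∀ c c' : C, ry c < ry c' → ρy c ≤ ρy c') →
        (∀ c c' : C, rz c < rz c' → ρz c ≤ ρz c') →
        Finset.univ.inf' Finset.univ_nonempty (fun c : C => ρx c + ρy c) +
          Finset.univ.inf' Finset.univ_nonempty (fun c : C => ρy c + ρz c) ≤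
        Finset.univ.inf' Finset.univ_nonempty (fun c : C => ρx c + ρy c + ρz c) +
          Finset.univ.inf' Finset.univ_nonempty (fun c : C => ρy c))
    {n : ℕ}
    (rank : Fin n → C → ℕ)
    (hrank : ∀ v, Function.Injective (rank v))
    (hsc : ∀ i j l : Fin n, i < j → j < l → ∀ c c' : C, c ≠ c' →
      ¬(rank i c < rank i c' ∧ rank j c' < rank j c ∧ rank l c < rank l c'))
    (ρ : Fin n → C → ℚ)
    (hcons : ∀ v (c c' : C), rank v c < rank v c' → ρ v c ≤ ρ v c') :
    ∀ i j : ℕ, i + 1 < j → j < n →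
      omegaFn ρ i j + omegaFn ρ (i + 1) (j + 1) ≤
        omegaFn ρ i (j + 1) + omegaFn ρ (i + 1) j := by
  intro i j hij hjn
  have hi : i < n := by omega
  set vi : Fin n := ⟨i, hi⟩
  set vj : Fin n := ⟨j, hjn⟩
  set σ := segmentSum ρ (i + 1) j
  obtain ⟨ry, hry_inj, hry_sc, hry_cons⟩ := exists_ranking_between (rank vi) (rank vj) (hrank vi) σ
    fun c c' => segmentSum_le_of_between hrank hsc hcons
  have h_ij : segmentSum ρ i j = fun c => ρ vi c + σ c :=
    funext (segmentSum_eq_add_succ_bot ρ (by omega) hi)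
  have h_i1j1 : segmentSum ρ (i + 1) (j + 1) = fun c => σ c + ρ vj c :=
    funext (segmentSum_succ_top ρ (by omega) hjn)
  have h_ij1 : segmentSum ρ i (j + 1) = fun c => ρ vi c + σ c + ρ vj c := by
    ext c
    rw [segmentSum_succ_top ρ (by omega) hjn, segmentSum_eq_add_succ_bot ρ (by omega) hi]
  simpa only [omegaFn_eq_inf'_segmentSum, h_ij, h_i1j1, h_ij1] using
    h3 (rank vi) ry (rank vj) (hrank vi) hry_inj (hrank vj) (fun c c' _ => hry_sc c c')
      (ρ vi) σ (ρ vj) (hcons vi) hry_cons (hcons vj)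
end

section
/- Let (≻_{v₁}, ≻_{v₂}, ≻_{v₃}) be a three-voter profile over a candidate set C that is single-crossing with respect to the order v₁ ⊲ v₂ ⊲ v₃, and let ρ be a misrepresentation function consistent with it. Then min_{c∈C}(ρ(v₁,c)+ρ(v₂,c)) + min_{c∈C}(ρ(v₂,c)+ρ(v₃,c)) ≤ min_{c∈C}(ρ(v₁,c)+ρ(v₂,c)+ρ(v₃,c)) + min_{c∈C} ρ(v₂,c). -/
/-!
Let `a` minimise `ρ₁ + ρ₂ + ρ₃` and `b` minimise `ρ₂`. If `ρ₁ b ≤ ρ₁ a`, the pair `(b, a)`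
witnesses the two minima on the left; if `ρ₃ b ≤ ρ₃ a`, the pair `(a, b)` does. Otherwise both
outer voters strictly prefer `a` to `b`, so by single-crossing the middle voter does as well,
whence `ρ₂ a ≤ ρ₂ b` and the pair `(a, a)` works.
-/

open Function

section

variable {C : Type*}

theorem lt_of_consistent_of_lt {α β : Type*} [LinearOrder α] [Preorder β] {r : C → α}
    {ρ : C → β} (hr : Injective r) (hρ : ∀ c c', r c < r c' → ρ c ≤ ρ c') {a b : C}
    (h : ρ a < ρ b) : r a < r b := by
  rcases lt_trichotomy (r a) (r b) with hab | hab | hab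
  · exact hab
  · exact absurd (hr hab ▸ h) (lt_irrefl _)
  · exact absurd (hρ b a hab) h.not_ge

theorem lt_of_singleCrossing {α : Type*} [LinearOrder α] {r₁ r₂ r₃ : C → α}
    (h₂ : Injective r₂)
    (hsc : ∀ c c' : C, c ≠ c' → ¬(r₁ c < r₁ c' ∧ r₂ c' < r₂ c ∧ r₃ c < r₃ c'))
    {a b : C} (h₁ : r₁ a < r₁ b) (h₃ : r₃ a < r₃ b) : r₂ a < r₂ b := by
  have hab : a ≠ b := fun h ↦ (h ▸ h₁).false
  rcases lt_trichotomy (r₂ a) (r₂ b) with h | h | h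
  · exact h
  · exact absurd (h₂ h) hab
  · exact absurd ⟨h₁, h, h₃⟩ (hsc a b hab)

theorem exists_add_le_of_middle_le {β : Type*} [AddCommMonoid β] [LinearOrder β]
    [IsOrderedAddMonoid β] (f g h : C → β) (a b : C)
    (hg : f a < f b → h a < h b → g a ≤ g b) :
    ∃ x y, f x + g x + (g y + h y) ≤ f a + g a + h a + g b := by
  by_cases hf : f b ≤ f a
  · refine ⟨b, a, ?_⟩
    calc f b + g b + (g a + h a) = f b + (g a + h a + g b) := by abel
      _ ≤ f a + (g a + h a + g b) := by gcongr
      _ = f a + g a + h a + g b := by abel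
  by_cases hh : h b ≤ h a
  · refine ⟨a, b, ?_⟩
    calc f a + g a + (g b + h b) = h b + (f a + g a + g b) := by abel
      _ ≤ h a + (f a + g a + g b) := by gcongr
      _ = f a + g a + h a + g b := by abel
  · refine ⟨a, a, ?_⟩
    have hmid := hg (not_le.mp hf) (not_le.mp hh)
    calc f a + g a + (g a + h a) = f a + g a + h a + g a := by abel
      _ ≤ f a + g a + h a + g b := by gcongr

end

/-- the concave Monge inequality for a three-voter profile that is
single-crossing with respect to the order `v₁ ⊲ v₂ ⊲ v₃`, with a consistent
misrepresentation function. Each voter's linear order is given by an injective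
ranking function (lower rank = more preferred). -/
theorem stmt6 {C : Type*} [Fintype C] [Nonempty C]
    (r₁ r₂ r₃ : C → ℕ)
    (h₁ : Function.Injective r₁) (h₂ : Function.Injective r₂)
    (h₃ : Function.Injective r₃)
    (hsc : ∀ c c' : C, c ≠ c' → ¬(r₁ c < r₁ c' ∧ r₂ c' < r₂ c ∧ r₃ c < r₃ c'))
    (ρ₁ ρ₂ ρ₃ : C → ℚ)
    (hc₁ : ∀ c c' : C, r₁ c < r₁ c' → ρ₁ c ≤ ρ₁ c')
    (hc₂ : ∀ c c' : C, r₂ c < r₂ c' → ρ₂ c ≤ ρ₂ c')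
    (hc₃ : ∀ c c' : C, r₃ c < r₃ c' → ρ₃ c ≤ ρ₃ c') :
    Finset.univ.inf' Finset.univ_nonempty (fun c : C => ρ₁ c + ρ₂ c) +
      Finset.univ.inf' Finset.univ_nonempty (fun c : C => ρ₂ c + ρ₃ c) ≤
    Finset.univ.inf' Finset.univ_nonempty (fun c : C => ρ₁ c + ρ₂ c + ρ₃ c) +
      Finset.univ.inf' Finset.univ_nonempty (fun c : C => ρ₂ c) := by
  obtain ⟨a, -, ha⟩ := Finset.univ.exists_mem_eq_inf' Finset.univ_nonempty
    (fun c : C => ρ₁ c + ρ₂ c + ρ₃ c)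
  obtain ⟨b, -, hb⟩ := Finset.univ.exists_mem_eq_inf' Finset.univ_nonempty ρ₂
  rw [ha, hb]
  have hmid (hab₁ : ρ₁ a < ρ₁ b) (hab₃ : ρ₃ a < ρ₃ b) : ρ₂ a ≤ ρ₂ b :=
    hc₂ a b <| lt_of_singleCrossing h₂ hsc (lt_of_consistent_of_lt h₁ hc₁ hab₁)
      (lt_of_consistent_of_lt h₃ hc₃ hab₃)
  obtain ⟨x, y, hxy⟩ := exists_add_le_of_middle_le ρ₁ ρ₂ ρ₃ a b hmid
  exact (add_le_add (Finset.inf'_le _ (Finset.mem_univ x))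
    (Finset.inf'_le _ (Finset.mem_univ y))).trans hxy
end

section
/- Let P be a profile over C = [m] with voters v₁, …, v_n that is single-crossing with respect to the order v₁ ⊲ ⋯ ⊲ v_n, and let ρ be a misrepresentation function consistent with P. Then the weight function ω(i,j) = min_{c∈C} Σ_{ℓ=i+1}^{j} ρ(v_ℓ, c) satisfies the concave Monge property: for all i, j with 0 ≤ i, i+1 < j, and j+1 ≤ n, it holds that ω(i,j) + ω(i+1,j+1) ≤ ω(i,j+1) + ω(i+1,j). -/
open Finset

section Exchange

variable {ι α : Type*} [AddCommMonoid α] [LinearOrder α] [IsOrderedAddMonoid α]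

theorem inf'_add_add_inf'_le_of_cross {s : Finset ι} (hs : s.Nonempty) (f g h : ι → α)
    (hcross : ∀ c ∈ s, ∀ d ∈ s, f c < f d → h c < h d → g c ≤ g d) :
    s.inf' hs (fun c => f c + g c) + s.inf' hs (fun c => g c + h c) ≤
      s.inf' hs (fun c => f c + g c + h c) + s.inf' hs g := by
  obtain ⟨c₀, hc₀, hc₀_min⟩ := exists_mem_eq_inf' hs fun c => f c + g c + h c
  obtain ⟨d₀, hd₀, hd₀_min⟩ := exists_mem_eq_inf' hs g
  rw [hc₀_min, hd₀_min]
  have hfg : ∀ c ∈ s, s.inf' hs (fun c => f c + g c) ≤ f c + g c := fun c hc =>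
    inf'_le (fun c => f c + g c) hc
  have hgh : ∀ c ∈ s, s.inf' hs (fun c => g c + h c) ≤ g c + h c := fun c hc =>
    inf'_le (fun c => g c + h c) hc
  by_cases hh : h d₀ ≤ h c₀
  · calc _ ≤ (f c₀ + g c₀) + (g d₀ + h d₀) := add_le_add (hfg c₀ hc₀) (hgh d₀ hd₀)
      _ ≤ (f c₀ + g c₀) + (g d₀ + h c₀) := by gcongr
      _ = f c₀ + g c₀ + h c₀ + g d₀ := by abel
  by_cases hf : f d₀ ≤ f c₀
  · calc _ ≤ (f d₀ + g d₀) + (g c₀ + h c₀) := add_le_add (hfg d₀ hd₀) (hgh c₀ hc₀)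
      _ ≤ (f c₀ + g d₀) + (g c₀ + h c₀) := by gcongr
      _ = f c₀ + g c₀ + h c₀ + g d₀ := by abel
  have hg : g c₀ ≤ g d₀ := hcross c₀ hc₀ d₀ hd₀ (not_le.mp hf) (not_le.mp hh)
  calc _ ≤ (f c₀ + g c₀) + (g c₀ + h c₀) := add_le_add (hfg c₀ hc₀) (hgh c₀ hc₀)
    _ ≤ (f c₀ + g c₀) + (g d₀ + h c₀) := by gcongr
    _ = f c₀ + g c₀ + h c₀ + g d₀ := by abel

end Exchange

section SingleCrossing

variable {V C β γ : Type*}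

def IsSingleCrossing [Preorder V] [LT β] (rank : V → C → β) : Prop :=
  ∀ i j l : V, i < j → j < l → ∀ c c' : C, c ≠ c' →
    ¬(rank i c < rank i c' ∧ rank j c' < rank j c ∧ rank l c < rank l c')

def IsConsistent [LT β] [LE γ] (rank : V → C → β) (ρ : V → C → γ) : Prop :=
  ∀ v c c', rank v c < rank v c' → ρ v c ≤ ρ v c'

variable [LinearOrder β] [Preorder γ] {rank : V → C → β} {ρ : V → C → γ}

theorem IsConsistent.rank_lt_of_lt (hcons : IsConsistent rank ρ) {v : V}
    (hinj : Function.Injective (rank v)) {c d : C} (hlt : ρ v c < ρ v d) :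
    rank v c < rank v d := by
  have hne : c ≠ d := by rintro rfl; exact lt_irrefl _ hlt
  refine (hinj.ne hne).lt_or_gt.resolve_right fun hgt => ?_
  exact (hcons v d c hgt).not_gt hlt

theorem IsSingleCrossing.le_of_lt_of_lt [Preorder V] (hsc : IsSingleCrossing rank)
    (hinj : ∀ v, Function.Injective (rank v)) (hcons : IsConsistent rank ρ)
    {i l j : V} (hil : i < l) (hlj : l < j) {c d : C}
    (hi : ρ i c < ρ i d) (hj : ρ j c < ρ j d) : ρ l c ≤ ρ l d := by
  have hne : c ≠ d := by rintro rfl; exact lt_irrefl _ hi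
  have hrank_l : ¬rank l d < rank l c := fun h =>
    hsc i l j hil hlj c d hne
      ⟨hcons.rank_lt_of_lt (hinj i) hi, h, hcons.rank_lt_of_lt (hinj j) hj⟩
  exact hcons l c d ((not_lt.mp hrank_l).lt_of_ne ((hinj l).ne hne))

end SingleCrossing

section SegmentCost

variable {C : Type*} {n : ℕ}

def segmentCost (ρ : Fin n → C → ℚ) (i j : ℕ) (c : C) : ℚ :=
  ∑ l ∈ Ico i j, if h : l < n then ρ ⟨l, h⟩ c else 0

theorem omegaFn_eq_inf'_segmentCost [Fintype C] [Nonempty C] (ρ : Fin n → C → ℚ) (i j : ℕ) :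
    omegaFn ρ i j = univ.inf' univ_nonempty (segmentCost ρ i j) :=
  rfl

theorem segmentCost_eq_add_succ (ρ : Fin n → C → ℚ) {i j : ℕ} (hij : i < j) (hi : i < n)
    (c : C) : segmentCost ρ i j c = ρ ⟨i, hi⟩ c + segmentCost ρ (i + 1) j c := by
  rw [segmentCost, sum_eq_sum_Ico_succ_bot hij, dif_pos hi, segmentCost]

theorem segmentCost_succ_right (ρ : Fin n → C → ℚ) {i j : ℕ} (hij : i ≤ j) (hj : j < n)
    (c : C) : segmentCost ρ i (j + 1) c = segmentCost ρ i j c + ρ ⟨j, hj⟩ c := by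
  rw [segmentCost, sum_Ico_succ_top hij, dif_pos hj, segmentCost]

theorem segmentCost_le_segmentCost (ρ : Fin n → C → ℚ) {i j : ℕ} {c d : C}
    (hle : ∀ l (hl : l < n), i ≤ l → l < j → ρ ⟨l, hl⟩ c ≤ ρ ⟨l, hl⟩ d) :
    segmentCost ρ i j c ≤ segmentCost ρ i j d := by
  refine sum_le_sum fun l hl => ?_
  rw [mem_Ico] at hl
  split_ifs with hln
  · exact hle l hln hl.1 hl.2
  · exact le_rfl

end SegmentCost

/-- for single-crossing preferences with a consistent
misrepresentation function, the weight function `ω` satisfies the concave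
Monge property. -/
theorem stmt7 {n : ℕ} {C : Type*} [Fintype C] [Nonempty C]
    (rank : Fin n → C → ℕ)
    (hrank : ∀ v, Function.Injective (rank v))
    (hsc : ∀ i j l : Fin n, i < j → j < l → ∀ c c' : C, c ≠ c' →
      ¬(rank i c < rank i c' ∧ rank j c' < rank j c ∧ rank l c < rank l c'))
    (ρ : Fin n → C → ℚ)
    (hcons : ∀ v (c c' : C), rank v c < rank v c' → ρ v c ≤ ρ v c') :
    ∀ i j : ℕ, i + 1 < j → j + 1 ≤ n →
      omegaFn ρ i j + omegaFn ρ (i + 1) (j + 1) ≤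
        omegaFn ρ i (j + 1) + omegaFn ρ (i + 1) j := by
  intro i j hij hjn
  have hi : i < n := by omega
  have hj : j < n := by omega
  have hcross : ∀ c ∈ univ, ∀ d ∈ univ, ρ ⟨i, hi⟩ c < ρ ⟨i, hi⟩ d → ρ ⟨j, hj⟩ c < ρ ⟨j, hj⟩ d →
      segmentCost ρ (i + 1) j c ≤ segmentCost ρ (i + 1) j d :=
    fun c _ d _ hic hjc => segmentCost_le_segmentCost ρ fun l _ hil hlj =>
      IsSingleCrossing.le_of_lt_of_lt hsc hrank hcons (Fin.mk_lt_mk.mpr hil)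
        (Fin.mk_lt_mk.mpr hlj) hic hjc
  have hcost_left : segmentCost ρ i j = fun c => ρ ⟨i, hi⟩ c + segmentCost ρ (i + 1) j c :=
    funext (segmentCost_eq_add_succ ρ (by omega) hi)
  have hcost_right :
      segmentCost ρ (i + 1) (j + 1) = fun c => segmentCost ρ (i + 1) j c + ρ ⟨j, hj⟩ c :=
    funext (segmentCost_succ_right ρ (by omega) hj)
  have hcost_both : segmentCost ρ i (j + 1) =
      fun c => ρ ⟨i, hi⟩ c + segmentCost ρ (i + 1) j c + ρ ⟨j, hj⟩ c := by
    ext c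
    rw [segmentCost_succ_right ρ (by omega) hj, segmentCost_eq_add_succ ρ (by omega) hi]
  simp only [omegaFn_eq_inf'_segmentCost]
  rw [hcost_left, hcost_right, hcost_both]
  exact inf'_add_add_inf'_le_of_cross univ_nonempty _ _ _ hcross
end

section
/- Let T be a rooted tree on n vertices in which each vertex v has children child[v,1],…,child[v,n_v], and let k be a positive integer. Then Σ_{v} Σ_{i=1}^{n_v} min{k, |T_{child[v,i]}|} · min{k, |T_{v,i+1}|} ≤ 3nk. -/
/-- `u` belongs to the subtree `T_v` of the rooted tree encoded by `parent`
(the root is a fixed point of `parent`, and `parent` strictly decreases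
elsewhere, so ancestor chains have length at most `n`). -/
def inSub {n : ℕ} (parent : Fin n → Fin n) (v u : Fin n) : Prop :=
  ∃ t ∈ Finset.range (n + 1), parent^[t] u = v

instance {n : ℕ} (parent : Fin n → Fin n) (v u : Fin n) :
    Decidable (inSub parent v u) := by
  unfold inSub; infer_instance

/-- The vertex set of the tree `T_{v,i}` (0-indexed in `i`): the subtree `T_v`
with the subtrees rooted at the first `i` children of `v` removed; the children
of `v` are listed by `childList v`. In particular `T_{v,0} = T_v`. -/
def Tvi {n : ℕ} (parent : Fin n → Fin n) (childList : Fin n → List (Fin n))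
    (v : Fin n) (i : ℕ) : Finset (Fin n) :=
  Finset.univ.filter fun u =>
    inSub parent v u ∧
      ∀ i' : Fin (childList v).length, (i' : ℕ) < i →
        ¬ inSub parent ((childList v).get i') u

/-!
Let `φ_k(x) = min(x, k)² + 2k(x - k)` (truncated subtraction): this is `x²` up to `k` and then
grows with slope `2k`, so `φ_k(x) ≤ 2kx`, and it satisfies
`min(k, a) · min(k, b) + φ_k(a) + φ_k(b) ≤ φ_k(a + b)`.
Since `|T_{v,i}| = |T_{child[v,i]}| + |T_{v,i+1}|`, peeling the children off `T_v` one at a time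
bounds the inner sum at `v` by `φ_k(|T_v|) - Σ_i φ_k(|T_{child[v,i]}|)`.
Summing over `v`, every non-root vertex occurs once with each sign, which leaves `φ_k(n) ≤ 2kn`.
-/

open Finset Function

def cappedSq (k x : ℕ) : ℕ := min x k ^ 2 + 2 * k * (x - k)

lemma cappedSq_le (k x : ℕ) : cappedSq k x ≤ 2 * k * x := by
  unfold cappedSq
  rcases le_total x k with h | h
  · rw [min_eq_left h, Nat.sub_eq_zero_of_le h]
    nlinarith
  · rw [min_eq_right h]
    zify [h]
    nlinarith

lemma min_mul_min_add_cappedSq_add_cappedSq_le (k a b : ℕ) :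
    min k a * min k b + cappedSq k a + cappedSq k b ≤ cappedSq k (a + b) := by
  unfold cappedSq
  rcases le_total a k with ha | ha <;> rcases le_total b k with hb | hb <;>
    rcases le_total (a + b) k with hab | hab <;>
    simp only [min_eq_left, min_eq_right, Nat.sub_eq_zero_of_le, ha, hb, hab] <;>
    zify [ha, hb, hab] <;>
    nlinarith

lemma sum_min_mul_min_add_cappedSq_le (k : ℕ) {m : ℕ} (a : Fin m → ℕ) (s : ℕ → ℕ)
    (hs : ∀ i : Fin m, s i = a i + s (i + 1)) :
    ∑ i, (min k (a i) * min k (s (i + 1)) + cappedSq k (a i)) + cappedSq k (s m) ≤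
      cappedSq k (s 0) := by
  induction m with
  | zero => simp
  | succ m ih =>
    have hm : s m = a (Fin.last m) + s (m + 1) := hs (Fin.last m)
    have hstep := min_mul_min_add_cappedSq_add_cappedSq_le k (a (Fin.last m)) (s (m + 1))
    rw [← hm] at hstep
    have hrest := ih (fun i => a i.castSucc) fun i => hs i.castSucc
    rw [Fin.sum_univ_castSucc]
    simp only [Fin.val_castSucc, Fin.val_last] at hrest ⊢
    omega

section Ancestry

variable {n : ℕ} {parent : Fin n → Fin n}

lemma add_le_of_not_isFixedPt_iterate (hle : ∀ x, parent x ≤ x) {u : Fin n} {t : ℕ}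
    (h : ¬ IsFixedPt parent (parent^[t] u)) : (parent^[t] u : ℕ) + t ≤ u := by
  induction t with
  | zero => simp
  | succ t ih =>
    rw [iterate_succ_apply'] at h ⊢
    have hfix : ¬ IsFixedPt parent (parent^[t] u) := fun hx => h hx.apply
    have hlt : parent (parent^[t] u) < parent^[t] u := lt_of_le_of_ne (hle _) hfix
    have := ih hfix
    rw [Fin.lt_def] at hlt
    omega

lemma inSub_iff_exists_iterate (hle : ∀ x, parent x ≤ x) {v u : Fin n} :
    inSub parent v u ↔ ∃ t, parent^[t] u = v := by
  refine ⟨fun ⟨t, _, ht⟩ => ⟨t, ht⟩, fun ⟨t, ht⟩ => ?_⟩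
  by_cases htn : t ≤ n
  · exact ⟨t, mem_range.2 (by omega), ht⟩
  have hfix : IsFixedPt parent (parent^[n] u) := by
    by_contra hfix
    have := add_le_of_not_isFixedPt_iterate hle hfix
    omega
  refine ⟨n, mem_range.2 (by omega), ?_⟩
  rw [← ht, show t = (t - n) + n by omega, iterate_add_apply, (hfix.iterate (t - n)).eq]

lemma le_of_inSub (hle : ∀ x, parent x ≤ x) {v u : Fin n} (h : inSub parent v u) : v ≤ u := by
  obtain ⟨t, -, rfl⟩ := h
  exact iterate_le_id_of_le_id hle t u

lemma lt_of_parent_eq (hle : ∀ x, parent x ≤ x) {c v : Fin n} (hc : parent c = v)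
    (hcv : c ≠ v) : v < c :=
  lt_of_le_of_ne (hc ▸ hle c) (Ne.symm hcv)

lemma inSub_of_parent_eq (hle : ∀ x, parent x ≤ x) {c v u : Fin n} (hc : parent c = v)
    (h : inSub parent c u) : inSub parent v u := by
  rw [inSub_iff_exists_iterate hle] at h ⊢
  obtain ⟨t, rfl⟩ := h
  exact ⟨t + 1, by rw [iterate_succ_apply', hc]⟩

lemma eq_of_inSub_of_inSub (hle : ∀ x, parent x ≤ x) {c c' v u : Fin n}
    (hc : parent c = v) (hcv : c ≠ v) (hc' : parent c' = v) (hcv' : c' ≠ v)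
    (h : inSub parent c u) (h' : inSub parent c' u) : c = c' := by
  rw [inSub_iff_exists_iterate hle] at h h'
  obtain ⟨t, rfl⟩ := h
  obtain ⟨t', rfl⟩ := h'
  wlog htt : t ≤ t' generalizing t t'
  · exact (this t' hc' hcv' t hc hcv (by omega)).symm
  obtain ⟨_ | s, rfl⟩ := Nat.exists_eq_add_of_le htt
  · rfl
  have hle' : parent^[t + (s + 1)] u ≤ v := by
    rw [add_comm, iterate_add_apply, iterate_succ_apply, hc]
    exact iterate_le_id_of_le_id hle s v
  exact absurd hle' (lt_of_parent_eq hle hc' hcv').not_ge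

end Ancestry

section Subtrees

variable {n : ℕ} {parent : Fin n → Fin n} {childList : Fin n → List (Fin n)}

lemma mem_Tvi {v u : Fin n} {i : ℕ} :
    u ∈ Tvi parent childList v i ↔ inSub parent v u ∧
      ∀ j : Fin (childList v).length, (j : ℕ) < i →
        ¬ inSub parent ((childList v).get j) u := by
  simp [Tvi]

lemma Tvi_succ (v : Fin n) (i : Fin (childList v).length) :
    Tvi parent childList v (i + 1) =
      Tvi parent childList v i \ Tvi parent childList ((childList v).get i) 0 := by
  ext u
  simp only [mem_Tvi, mem_sdiff, Nat.lt_succ_iff_lt_or_eq, not_lt_zero, false_imp_iff,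
    imp_true_iff, and_true, Fin.val_inj, or_imp, forall_and, forall_eq, and_assoc]

lemma Tvi_child_subset (hle : ∀ x, parent x ≤ x) (hnd : ∀ v, (childList v).Nodup)
    (hmem : ∀ v u : Fin n, u ∈ childList v ↔ parent u = v ∧ u ≠ v) (v : Fin n)
    (i : Fin (childList v).length) :
    Tvi parent childList ((childList v).get i) 0 ⊆ Tvi parent childList v i := by
  intro u hu
  rw [mem_Tvi] at hu ⊢
  obtain ⟨hci, hciv⟩ := (hmem v _).1 (List.get_mem _ i)
  refine ⟨inSub_of_parent_eq hle hci hu.1, fun j hji hju => hji.ne ?_⟩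
  obtain ⟨hcj, hcjv⟩ := (hmem v _).1 (List.get_mem _ j)
  have := eq_of_inSub_of_inSub hle hcj hcjv hci hciv hju hu.1
  rw [(hnd v).get_inj_iff.1 this]

lemma card_Tvi_eq_add (hle : ∀ x, parent x ≤ x) (hnd : ∀ v, (childList v).Nodup)
    (hmem : ∀ v u : Fin n, u ∈ childList v ↔ parent u = v ∧ u ≠ v) (v : Fin n)
    (i : Fin (childList v).length) :
    #(Tvi parent childList v i) =
      #(Tvi parent childList ((childList v).get i) 0) + #(Tvi parent childList v (i + 1)) := by
  rw [Tvi_succ, add_comm, card_sdiff_add_card_eq_card (Tvi_child_subset hle hnd hmem v i)]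

lemma sum_min_mul_min_add_cappedSq_card_le (hle : ∀ x, parent x ≤ x)
    (hnd : ∀ v, (childList v).Nodup)
    (hmem : ∀ v u : Fin n, u ∈ childList v ↔ parent u = v ∧ u ≠ v) (k : ℕ) (v : Fin n) :
    ∑ i : Fin (childList v).length,
        min k #(Tvi parent childList ((childList v).get i) 0) *
          min k #(Tvi parent childList v (i + 1)) +
      ∑ i : Fin (childList v).length,
        cappedSq k #(Tvi parent childList ((childList v).get i) 0) ≤
      cappedSq k #(Tvi parent childList v 0) := by
  rw [← sum_add_distrib]
  exact (Nat.le_add_right _ _).trans <| sum_min_mul_min_add_cappedSq_le k _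
    (fun j => #(Tvi parent childList v j)) (card_Tvi_eq_add hle hnd hmem v)

lemma sum_sum_get_childList {M : Type*} [AddCommMonoid M] (hnd : ∀ v, (childList v).Nodup)
    (hmem : ∀ v u : Fin n, u ∈ childList v ↔ parent u = v ∧ u ≠ v) (g : Fin n → M) :
    ∑ v, ∑ i : Fin (childList v).length, g ((childList v).get i) =
      ∑ u with parent u ≠ u, g u := by
  rw [← sum_fiberwise {u | parent u ≠ u} parent]
  refine sum_congr rfl fun v _ => ?_
  have hset :
      (childList v).toFinset = ({u | parent u ≠ u ∧ parent u = v} : Finset (Fin n)) := by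
    ext u
    simp only [List.mem_toFinset, hmem, mem_filter, mem_univ, true_and]
    constructor
    · rintro ⟨rfl, h⟩
      exact ⟨Ne.symm h, rfl⟩
    · rintro ⟨h, rfl⟩
      exact ⟨rfl, Ne.symm h⟩
  rw [filter_filter, ← hset, List.sum_toFinset _ (hnd v)]
  simp

end Subtrees

theorem stmt13_general {n : ℕ} (hn : 0 < n) (k : ℕ)
    (parent : Fin n → Fin n)
    (hroot : parent ⟨0, hn⟩ = ⟨0, hn⟩)
    (hpar : ∀ v : Fin n, v ≠ ⟨0, hn⟩ → parent v < v)
    (childList : Fin n → List (Fin n))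
    (hnd : ∀ v, (childList v).Nodup)
    (hmem : ∀ v u : Fin n, u ∈ childList v ↔ parent u = v ∧ u ≠ v) :
    (∑ v : Fin n, ∑ i : Fin (childList v).length,
        min k (Tvi parent childList ((childList v).get i) 0).card *
          min k (Tvi parent childList v ((i : ℕ) + 1)).card) ≤ 3 * n * k := by
  set root : Fin n := ⟨0, hn⟩
  have hle : ∀ x, parent x ≤ x := fun x => by
    by_cases hx : x = root
    · rw [hx, hroot]
    · exact (hpar x hx).le
  have hnonroot : ({u | parent u ≠ u} : Finset (Fin n)) = univ.erase root := by
    ext u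
    simp only [mem_filter, mem_univ, true_and, mem_erase, and_true]
    exact ⟨fun h hu => h (hu ▸ hroot), fun hu => (hpar u hu).ne⟩
  have htelescope := sum_le_sum fun v (_ : v ∈ univ) =>
    sum_min_mul_min_add_cappedSq_card_le hle hnd hmem k v
  rw [sum_add_distrib,
    sum_sum_get_childList hnd hmem fun u => cappedSq k #(Tvi parent childList u 0), hnonroot,
    ← add_sum_erase univ (fun u => cappedSq k #(Tvi parent childList u 0)) (mem_univ root)]
    at htelescope
  calc _ ≤ cappedSq k #(Tvi parent childList root 0) := by omega
    _ ≤ 2 * k * #(Tvi parent childList root 0) := cappedSq_le _ _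
    _ ≤ 2 * k * n := by grw [card_le_univ, Fintype.card_fin]
    _ ≤ 3 * n * k := by nlinarith

/-- in a rooted tree on `n` vertices, for every positive
integer `k`,
`Σ_v Σ_i min{k, |T_{child[v,i]}|} · min{k, |T_{v,i+1}|} ≤ 3nk`. -/
theorem stmt13 {n : ℕ} (hn : 0 < n) (k : ℕ) (hk : 0 < k)
    (parent : Fin n → Fin n)
    (hroot : parent ⟨0, hn⟩ = ⟨0, hn⟩)
    (hpar : ∀ v : Fin n, v ≠ ⟨0, hn⟩ → parent v < v)
    (childList : Fin n → List (Fin n))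
    (hnd : ∀ v, (childList v).Nodup)
    (hmem : ∀ v u : Fin n, u ∈ childList v ↔ parent u = v ∧ u ≠ v) :
    (∑ v : Fin n, ∑ i : Fin (childList v).length,
        min k (Tvi parent childList ((childList v).get i) 0).card *
          min k (Tvi parent childList v ((i : ℕ) + 1)).card) ≤ 3 * n * k :=
  stmt13_general hn k parent hroot hpar childList hnd hmem
end

section
/- Fix positive integers n and k. Consider any finite process that starts from a multiset of positive integers summing to n and repeatedly replaces two elements a and b, where a > k, by their sum a + b, accruing a cost of k · min{k, b} at each such step. Then the total accrued cost over the whole process is at most nk. -/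
/-! The potential `k · ∑ min(k, x)` over the current multiset starts at most at `nk`, never goes
negative, and a merge of `a > k` with `b` lowers it by exactly `k · min(k, b)`: the terms of `a` and
of `a + b` both equal `k`, so only the term of `b` disappears. Hence the costs telescope. -/

open Finset

def cappedSum (k : ℕ) (s : Multiset ℕ) : ℕ :=
  (s.map (min k)).sum

lemma cappedSum_le_sum (k : ℕ) (s : Multiset ℕ) : cappedSum k s ≤ s.sum := by
  simpa [cappedSum] using Multiset.sum_map_le_sum_map (min k) id fun x _ => min_le_right k x

lemma cappedSum_merge {k a b : ℕ} {s : Multiset ℕ} (ha : a ∈ s) (hb : b ∈ s.erase a)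
    (hka : k < a) :
    cappedSum k s = cappedSum k ((a + b) ::ₘ (s.erase a).erase b) + min k b := by
  have hmin_a : min k a = k := min_eq_left hka.le
  have hmin_ab : min k (a + b) = k := min_eq_left (hka.le.trans (Nat.le_add_right a b))
  conv_lhs => rw [← Multiset.cons_erase ha, ← Multiset.cons_erase hb]
  simp only [cappedSum, Multiset.map_cons, Multiset.sum_cons, hmin_a, hmin_ab]
  ring

lemma sum_range_add_eq_of_telescoping {f c : ℕ → ℕ} {N : ℕ}
    (h : ∀ t < N, f t = f (t + 1) + c t) : ∑ t ∈ range N, c t + f N = f 0 := by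
  induction N with
  | zero => simp
  | succ N ih =>
    rw [sum_range_succ, ← ih fun t ht => h t (ht.trans N.lt_succ_self), h N N.lt_succ_self]
    ring

theorem stmt14_general (n k : ℕ)
    (N : ℕ) (M : ℕ → Multiset ℕ) (cost : ℕ → ℕ)
    (hsum : (M 0).sum = n)
    (hstep : ∀ t < N, ∃ a b : ℕ, a ∈ M t ∧ b ∈ (M t).erase a ∧ k < a ∧
      M (t + 1) = (a + b) ::ₘ (((M t).erase a).erase b) ∧
      cost t = k * min k b) :
    ∑ t ∈ Finset.range N, cost t ≤ n * k := by
  have htelescope : ∀ t < N, k * cappedSum k (M t) = k * cappedSum k (M (t + 1)) + cost t := by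
    intro t ht
    obtain ⟨a, b, ha, hb, hka, hM, hcost⟩ := hstep t ht
    rw [cappedSum_merge ha hb hka, hM, hcost, mul_add]
  have htotal := sum_range_add_eq_of_telescoping htelescope
  calc ∑ t ∈ range N, cost t ≤ k * cappedSum k (M 0) := by omega
    _ ≤ k * n := Nat.mul_le_mul_left k (hsum ▸ cappedSum_le_sum k (M 0))
    _ = n * k := mul_comm k n

/-- consider a finite merging process starting from a multiset of
positive integers summing to `n`; each step replaces two elements `a`, `b` with
`a > k` by `a + b`, at cost `k · min{k, b}`. The total cost is at most `nk`. -/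
theorem stmt14 (n k : ℕ) (hn : 0 < n) (hk : 0 < k)
    (N : ℕ) (M : ℕ → Multiset ℕ) (cost : ℕ → ℕ)
    (hpos : ∀ x ∈ M 0, 0 < x)
    (hsum : (M 0).sum = n)
    (hstep : ∀ t < N, ∃ a b : ℕ, a ∈ M t ∧ b ∈ (M t).erase a ∧ k < a ∧
      M (t + 1) = (a + b) ::ₘ (((M t).erase a).erase b) ∧
      cost t = k * min k b) :
    ∑ t ∈ Finset.range N, cost t ≤ n * k :=
  stmt14_general n k N M cost hsum hstep
end

section
/- Let P be a profile over C that is single-crossing on the grid V = [n₁] × [n₂], let k ≤ |C|, and let w_opt be a canonical k-assignment for P. Then for every candidate c, the inverse image w_opt⁻¹(c) is a (possibly empty) subrectangle of V, i.e., a set of the form [i₀:i₁] × [j₀:j₁]. -/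
/-- The grid graph on `[n₁] × [n₂]`: vertices `(i,j)` and `(i',j')` are
adjacent iff `|i−i'| + |j−j'| = 1`. -/
def gridGraph (n₁ n₂ : ℕ) : SimpleGraph (Fin n₁ × Fin n₂) :=
  SimpleGraph.fromRel fun p q =>
    ((p.1 : ℤ) - (q.1 : ℤ)).natAbs + ((p.2 : ℤ) - (q.2 : ℤ)).natAbs = 1

/-!
The grid is the box product of two paths, so its graph distance is the `ℓ¹` distance, and `u`
lies on a shortest `s`–`t` path exactly when it lies in the bounding box of `s` and `t`. If a
canonical assignment gives `s` and `t` the candidate `c` but gives `u` some `c' ≠ c`, then `s`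
and `t` prefer `c` to `c'` while `u` prefers `c'` to `c`: single-crossing along a shortest path
through `s`, `u`, `t` forbids this. So each fibre contains the bounding box of any two of its
points, and such a subset of the grid is the box spanned by its extreme coordinates.
-/

open Function

namespace SimpleGraph

lemma dist_boxProd {α β : Type*} {G : SimpleGraph α} {H : SimpleGraph β} {x y : α × β}
    (hG : G.Reachable x.1 y.1) (hH : H.Reachable x.2 y.2) :
    (G □ H).dist x y = G.dist x.1 y.1 + H.dist x.2 y.2 := by
  have hGH : (G □ H).Reachable x y := reachable_boxProd.mpr ⟨hG, hH⟩
  apply Nat.cast_injective (R := ℕ∞)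
  push_cast
  rw [hGH.coe_dist_eq_edist, hG.coe_dist_eq_edist, hH.coe_dist_eq_edist, edist_boxProd]

lemma natAbs_sub_le_length_of_pathGraph {n : ℕ} {u v : Fin n} (p : (pathGraph n).Walk u v) :
    ((u : ℤ) - v).natAbs ≤ p.length := by
  induction p with
  | nil => simp
  | cons h _ ih =>
    rw [pathGraph_adj] at h
    rw [Walk.length_cons]
    omega

lemma exists_pathGraph_walk_length_eq {n : ℕ} (d : ℕ) :
    ∀ u v : Fin n, (u : ℕ) + d = v → ∃ p : (pathGraph n).Walk u v, p.length = d := by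
  induction d with
  | zero => exact fun u v h => ⟨Walk.nil.copy rfl (Fin.ext h), by simp⟩
  | succ d ih =>
    intro u v h
    obtain ⟨p, hp⟩ := ih ⟨u + 1, by omega⟩ v (by simp only; omega)
    exact ⟨Walk.cons (pathGraph_adj.mpr (Or.inl rfl)) p, by rw [Walk.length_cons, hp]⟩

lemma pathGraph_dist {n : ℕ} (u v : Fin n) : (pathGraph n).dist u v = ((u : ℤ) - v).natAbs := by
  refine le_antisymm ?_ ?_
  · wlog huv : u ≤ v generalizing u v
    · rw [dist_comm, ← Int.natAbs_neg, neg_sub]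
      exact this v u (le_of_not_ge huv)
    obtain ⟨p, hp⟩ := exists_pathGraph_walk_length_eq (n := n) (v - u : ℕ) u v
      (by rw [Fin.le_def] at huv; omega)
    exact (dist_le p).trans_eq (by rw [hp]; omega)
  · obtain ⟨p, hp⟩ := (pathGraph_preconnected n u v).exists_walk_length_eq_dist
    exact hp ▸ natAbs_sub_le_length_of_pathGraph p

variable {V C : Type*} {G : SimpleGraph V}

lemma exists_shortest_path_through {s u t : V} (hsu : G.Reachable s u) (hut : G.Reachable u t)
    (hsu_ne : s ≠ u) (hut_ne : u ≠ t) (hdist : G.dist s u + G.dist u t = G.dist s t) :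
    ∃ X : G.Walk s t, X.IsPath ∧ (∀ Y : G.Walk s t, X.length ≤ Y.length) ∧
      [s, u, t].Sublist X.support := by
  obtain ⟨X₁, hX₁⟩ := hsu.exists_walk_length_eq_dist
  obtain ⟨X₂, hX₂⟩ := hut.exists_walk_length_eq_dist
  have hlen : (X₁.append X₂).length = G.dist s t := by
    rw [Walk.length_append, hX₁, hX₂, hdist]
  refine ⟨X₁.append X₂, Walk.isPath_of_length_eq_dist _ hlen, fun Y => hlen ▸ dist_le Y, ?_⟩
  rw [Walk.support_append, ← X₁.cons_tail_support]
  exact (List.singleton_sublist.mpr (Walk.end_mem_tail_support_of_ne hsu_ne X₁)).cons_cons s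
    |>.append (List.singleton_sublist.mpr (Walk.end_mem_tail_support_of_ne hut_ne X₂))

variable (G) in
def SingleCrossingOnGeodesics (rank : V → C → ℕ) : Prop :=
  ∀ s t : V, ∀ X : G.Walk s t, X.IsPath → (∀ Y : G.Walk s t, X.length ≤ Y.length) →
    ∀ u₁ u₂ u₃ : V, List.Sublist [u₁, u₂, u₃] X.support → ∀ c c' : C, c ≠ c' →
      ¬(rank u₁ c < rank u₁ c' ∧ rank u₂ c' < rank u₂ c ∧ rank u₃ c < rank u₃ c')

lemma SingleCrossingOnGeodesics.eq_of_dist_add_dist_eq {rank : V → C → ℕ} {w : V → C}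
    (hsc : G.SingleCrossingOnGeodesics rank) (hrank : ∀ v, Injective (rank v))
    (hcan : ∀ v v', rank v (w v) ≤ rank v (w v')) {s u t : V} (hsu : G.Reachable s u)
    (hut : G.Reachable u t) (hdist : G.dist s u + G.dist u t = G.dist s t) (hst : w s = w t) :
    w u = w s := by
  by_cases hus : u = s
  · rw [hus]
  by_cases hut' : u = t
  · rw [hut', hst]
  by_contra hne
  have hlt : ∀ v v', w v' ≠ w v → rank v (w v) < rank v (w v') :=
    fun v v' h => (hcan v v').lt_of_ne fun h' => h (hrank v h').symm
  obtain ⟨X, hX, hmin, hsub⟩ := exists_shortest_path_through hsu hut (Ne.symm hus) hut' hdist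
  exact hsc s t X hX hmin s u t hsub (w s) (w u) (Ne.symm hne)
    ⟨hlt s u hne, hlt u s (Ne.symm hne), hst ▸ hlt t u (hst ▸ hne)⟩

end SimpleGraph

open SimpleGraph

lemma gridGraph_eq_boxProd (n₁ n₂ : ℕ) : gridGraph n₁ n₂ = pathGraph n₁ □ pathGraph n₂ := by
  ext p q
  simp only [gridGraph, fromRel_adj, boxProd_adj, pathGraph_adj, ne_eq, Prod.ext_iff, Fin.ext_iff]
  omega

lemma gridGraph_preconnected (n₁ n₂ : ℕ) : (gridGraph n₁ n₂).Preconnected := by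
  rw [gridGraph_eq_boxProd]
  exact (pathGraph_preconnected n₁).boxProd (pathGraph_preconnected n₂)

lemma gridGraph_dist {n₁ n₂ : ℕ} (p q : Fin n₁ × Fin n₂) :
    (gridGraph n₁ n₂).dist p q = ((p.1 : ℤ) - q.1).natAbs + ((p.2 : ℤ) - q.2).natAbs := by
  rw [gridGraph_eq_boxProd, dist_boxProd (pathGraph_preconnected _ _ _)
    (pathGraph_preconnected _ _ _), pathGraph_dist, pathGraph_dist]

lemma exists_rectangle_eq_of_dist_convex {n₁ n₂ : ℕ} {S : Set (Fin n₁ × Fin n₂)}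
    (hS : ∀ s ∈ S, ∀ t ∈ S, ∀ u, (gridGraph n₁ n₂).dist s u + (gridGraph n₁ n₂).dist u t =
      (gridGraph n₁ n₂).dist s t → u ∈ S) :
    ∃ i₀ i₁ j₀ j₁ : ℕ,
      S = {p | i₀ ≤ (p.1 : ℕ) ∧ (p.1 : ℕ) ≤ i₁ ∧ j₀ ≤ (p.2 : ℕ) ∧ (p.2 : ℕ) ≤ j₁} := by
  simp only [gridGraph_dist] at hS
  rcases S.eq_empty_or_nonempty with rfl | hne
  · exact ⟨1, 0, 1, 0, by ext p; simp; omega⟩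
  obtain ⟨a, ha, ha'⟩ := S.exists_min_image (fun p => (p.1 : ℕ)) S.toFinite hne
  obtain ⟨b, hb, hb'⟩ := S.exists_max_image (fun p => (p.1 : ℕ)) S.toFinite hne
  obtain ⟨e, he, he'⟩ := S.exists_min_image (fun p => (p.2 : ℕ)) S.toFinite hne
  obtain ⟨f, hf, hf'⟩ := S.exists_max_image (fun p => (p.2 : ℕ)) S.toFinite hne
  refine ⟨a.1, b.1, e.2, f.2, Set.ext fun p =>
    ⟨fun hp => ⟨ha' p hp, hb' p hp, he' p hp, hf' p hp⟩, ?_⟩⟩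
  rintro ⟨h₁, h₂, h₃, h₄⟩
  have hpa : (p.1, a.2) ∈ S := hS a ha b hb _ (by simp only; omega)
  have hpe : (p.1, e.2) ∈ S := hS _ hpa e he _ (by simp only; omega)
  have hpf : (p.1, f.2) ∈ S := hS _ hpa f hf _ (by simp only; omega)
  exact hS _ hpe _ hpf p (by simp only; omega)

theorem stmt15_general {n₁ n₂ m : ℕ}
    (rank : Fin n₁ × Fin n₂ → Fin m → ℕ)
    (hrank : ∀ v, Function.Injective (rank v))
    (hsc : ∀ s t : Fin n₁ × Fin n₂, ∀ X : (gridGraph n₁ n₂).Walk s t, X.IsPath →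
      (∀ Y : (gridGraph n₁ n₂).Walk s t, X.length ≤ Y.length) →
      ∀ u₁ u₂ u₃ : Fin n₁ × Fin n₂, List.Sublist [u₁, u₂, u₃] X.support →
        ∀ c c' : Fin m, c ≠ c' →
          ¬(rank u₁ c < rank u₁ c' ∧ rank u₂ c' < rank u₂ c ∧ rank u₃ c < rank u₃ c'))
    (w : Fin n₁ × Fin n₂ → Fin m)
    (hw_can : ∀ v, ∀ c ∈ Finset.univ.image w, rank v (w v) ≤ rank v c) :
    ∀ c : Fin m, ∃ i₀ i₁ j₀ j₁ : ℕ,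
      {p : Fin n₁ × Fin n₂ | w p = c} =
        {p : Fin n₁ × Fin n₂ |
          i₀ ≤ (p.1 : ℕ) ∧ (p.1 : ℕ) ≤ i₁ ∧ j₀ ≤ (p.2 : ℕ) ∧ (p.2 : ℕ) ≤ j₁} := by
  intro c
  have hcan : ∀ v v', rank v (w v) ≤ rank v (w v') :=
    fun v v' => hw_can v (w v') (Finset.mem_image_of_mem w (Finset.mem_univ v'))
  apply exists_rectangle_eq_of_dist_convex
  rintro s (rfl : w s = c) t (hst : w t = w s) u hdist
  exact SingleCrossingOnGeodesics.eq_of_dist_add_dist_eq hsc hrank hcan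
    (gridGraph_preconnected _ _ s u) (gridGraph_preconnected _ _ u t) hdist hst.symm

/-- for preferences single-crossing on the grid, every canonical
`k`-assignment assigns each candidate a (possibly empty) subrectangle of the
grid. A shortest `s`–`t` path is a path whose length is at most that of every
`s`–`t` walk. -/
theorem stmt15 {n₁ n₂ m k : ℕ}
    (rank : Fin n₁ × Fin n₂ → Fin m → ℕ)
    (hrank : ∀ v, Function.Injective (rank v))
    (hsc : ∀ s t : Fin n₁ × Fin n₂, ∀ X : (gridGraph n₁ n₂).Walk s t, X.IsPath →
      (∀ Y : (gridGraph n₁ n₂).Walk s t, X.length ≤ Y.length) →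
      ∀ u₁ u₂ u₃ : Fin n₁ × Fin n₂, List.Sublist [u₁, u₂, u₃] X.support →
        ∀ c c' : Fin m, c ≠ c' →
          ¬(rank u₁ c < rank u₁ c' ∧ rank u₂ c' < rank u₂ c ∧ rank u₃ c < rank u₃ c'))
    (ρ : Fin n₁ × Fin n₂ → Fin m → ℚ)
    (hcons : ∀ v (c c' : Fin m), rank v c < rank v c' → ρ v c ≤ ρ v c')
    (hk : k ≤ m)
    (w : Fin n₁ × Fin n₂ → Fin m)
    (hw_k : (Finset.univ.image w).card ≤ k)
    (hw_opt : ∀ w' : Fin n₁ × Fin n₂ → Fin m, (Finset.univ.image w').card ≤ k →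
      ∑ v, ρ v (w v) ≤ ∑ v, ρ v (w' v))
    (hw_can : ∀ v, ∀ c ∈ Finset.univ.image w, rank v (w v) ≤ rank v c) :
    ∀ c : Fin m, ∃ i₀ i₁ j₀ j₁ : ℕ,
      {p : Fin n₁ × Fin n₂ | w p = c} =
        {p : Fin n₁ × Fin n₂ |
          i₀ ≤ (p.1 : ℕ) ∧ (p.1 : ℕ) ≤ i₁ ∧ j₀ ≤ (p.2 : ℕ) ∧ (p.2 : ℕ) ≤ j₁} :=
  stmt15_general rank hrank hsc w hw_can
end

section
/- Let F be a tiling of the grid V = [n₁]×[n₂] into at most k subrectangles (a k-tiling). Then there exists a laminar tiling F' of V with at most k² rectangles that refines F. -/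
/-- The subrectangle `[i₀:i₁] × [j₀:j₁]` of the grid `[n₁] × [n₂]`
(coordinates are 0-indexed values of `Fin`s). -/
def gridRect (n₁ n₂ : ℕ) (i₀ i₁ j₀ j₁ : ℕ) : Finset (Fin n₁ × Fin n₂) :=
  Finset.univ.filter fun p =>
    i₀ ≤ (p.1 : ℕ) ∧ (p.1 : ℕ) ≤ i₁ ∧ j₀ ≤ (p.2 : ℕ) ∧ (p.2 : ℕ) ≤ j₁

/-- A finset of grid cells is a subrectangle. -/
def IsRect {n₁ n₂ : ℕ} (R : Finset (Fin n₁ × Fin n₂)) : Prop :=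
  ∃ i₀ i₁ j₀ j₁ : ℕ, R = gridRect n₁ n₂ i₀ i₁ j₀ j₁

/-- A tiling of the grid `[n₁] × [n₂]`: a partition of all grid cells into
nonempty subrectangles. -/
def IsTiling {n₁ n₂ : ℕ} (F : Finset (Finset (Fin n₁ × Fin n₂))) : Prop :=
  (∀ R ∈ F, IsRect R ∧ R.Nonempty) ∧
  (∀ R ∈ F, ∀ R' ∈ F, R ≠ R' → Disjoint R R') ∧
  (∀ p : Fin n₁ × Fin n₂, ∃ R ∈ F, p ∈ R)

/-- `F'` refines `F`: every rectangle of `F` is a union of rectangles of `F'`. -/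
def Refines {n₁ n₂ : ℕ} (F' F : Finset (Finset (Fin n₁ × Fin n₂))) : Prop :=
  ∀ R ∈ F, ∃ G ⊆ F', R = G.biUnion id

/-- `Laminar n₁ n₂ i₀ i₁ j₀ j₁ F`: `F` is a laminar tiling of the rectangle
`[i₀:i₁] × [j₀:j₁]`; either it is the single rectangle, or it is obtained by
splitting the rectangle with a vertical or a horizontal line and tiling both
sides laminarly. -/
inductive Laminar (n₁ n₂ : ℕ) : ℕ → ℕ → ℕ → ℕ → Finset (Finset (Fin n₁ × Fin n₂)) → Prop
  | single (i₀ i₁ j₀ j₁ : ℕ) : Laminar n₁ n₂ i₀ i₁ j₀ j₁ {gridRect n₁ n₂ i₀ i₁ j₀ j₁}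
  | vsplit {i₀ i₁ j₀ j₁ j : ℕ} {F₁ F₂ : Finset (Finset (Fin n₁ × Fin n₂))} :
      j₀ ≤ j → j < j₁ →
      Laminar n₁ n₂ i₀ i₁ j₀ j F₁ → Laminar n₁ n₂ i₀ i₁ (j + 1) j₁ F₂ →
      Laminar n₁ n₂ i₀ i₁ j₀ j₁ (F₁ ∪ F₂)
  | hsplit {i₀ i₁ j₀ j₁ i : ℕ} {F₁ F₂ : Finset (Finset (Fin n₁ × Fin n₂))} :
      i₀ ≤ i → i < i₁ →
      Laminar n₁ n₂ i₀ i j₀ j₁ F₁ → Laminar n₁ n₂ (i + 1) i₁ j₀ j₁ F₂ →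
      Laminar n₁ n₂ i₀ i₁ j₀ j₁ (F₁ ∪ F₂)



/-!
Cut the grid by vertical lines just left of the left edge of every rectangle of `F`; this gives
at most `k` column strips. No rectangle of `F` begins strictly inside a strip, and then none can
end strictly inside one either (its right neighbour would begin there), so every rectangle
meeting a strip spans its full width. Inside a strip the rectangles of `F` therefore cut it into
horizontal slabs, one per rectangle, which are stacked by horizontal lines. This is a laminar
tiling with at most `k` slabs in each of at most `k` strips.
-/

open Finset

section Grid

variable {n₁ n₂ : ℕ}

theorem mem_gridRect {i₀ i₁ j₀ j₁ : ℕ} {p : Fin n₁ × Fin n₂} :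
    p ∈ gridRect n₁ n₂ i₀ i₁ j₀ j₁ ↔
      i₀ ≤ (p.1 : ℕ) ∧ (p.1 : ℕ) ≤ i₁ ∧ j₀ ≤ (p.2 : ℕ) ∧ (p.2 : ℕ) ≤ j₁ := by
  simp [gridRect]

theorem gridRect_nonempty {i₀ i₁ j₀ j₁ : ℕ} (hi : i₀ ≤ i₁) (hi₁ : i₁ < n₁) (hj : j₀ ≤ j₁)
    (hj₁ : j₁ < n₂) : (gridRect n₁ n₂ i₀ i₁ j₀ j₁).Nonempty :=
  ⟨(⟨i₀, by omega⟩, ⟨j₀, by omega⟩), mem_gridRect.2 (by simp only; omega)⟩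

theorem gridRect_eq_union_of_row_split {i₀ i₁ j₀ j₁ i : ℕ} (h₀ : i₀ ≤ i + 1) (h₁ : i ≤ i₁) :
    gridRect n₁ n₂ i₀ i₁ j₀ j₁ = gridRect n₁ n₂ i₀ i j₀ j₁ ∪ gridRect n₁ n₂ (i + 1) i₁ j₀ j₁ := by
  ext p
  simp only [mem_union, mem_gridRect]
  omega

theorem gridRect_eq_union_of_col_split {i₀ i₁ j₀ j₁ j : ℕ} (h₀ : j₀ ≤ j + 1) (h₁ : j ≤ j₁) :
    gridRect n₁ n₂ i₀ i₁ j₀ j₁ = gridRect n₁ n₂ i₀ i₁ j₀ j ∪ gridRect n₁ n₂ i₀ i₁ (j + 1) j₁ := by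
  ext p
  simp only [mem_union, mem_gridRect]
  omega

theorem disjoint_gridRect_of_row_lt {i₀ i₁ i₀' i₁' j₀ j₁ j₀' j₁' : ℕ} (h : i₁ < i₀') :
    Disjoint (gridRect n₁ n₂ i₀ i₁ j₀ j₁) (gridRect n₁ n₂ i₀' i₁' j₀' j₁') := by
  refine disjoint_left.2 fun p hp hp' => ?_
  rw [mem_gridRect] at hp hp'
  omega

theorem disjoint_gridRect_of_col_lt {i₀ i₁ i₀' i₁' j₀ j₁ j₀' j₁' : ℕ} (h : j₁ < j₀') :
    Disjoint (gridRect n₁ n₂ i₀ i₁ j₀ j₁) (gridRect n₁ n₂ i₀' i₁' j₀' j₁') := by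
  refine disjoint_left.2 fun p hp hp' => ?_
  rw [mem_gridRect] at hp hp'
  omega

end Grid

namespace Laminar

variable {n₁ n₂ i₀ i₁ j₀ j₁ : ℕ} {F : Finset (Finset (Fin n₁ × Fin n₂))}

theorem biUnion_eq (h : Laminar n₁ n₂ i₀ i₁ j₀ j₁ F) :
    F.biUnion id = gridRect n₁ n₂ i₀ i₁ j₀ j₁ := by
  induction h with
  | single => simp
  | vsplit h₀ h₁ _ _ ih₁ ih₂ =>
    rw [union_biUnion, ih₁, ih₂]
    exact (gridRect_eq_union_of_col_split (by omega) h₁.le).symm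
  | hsplit h₀ h₁ _ _ ih₁ ih₂ =>
    rw [union_biUnion, ih₁, ih₂]
    exact (gridRect_eq_union_of_row_split (by omega) h₁.le).symm

theorem subset_gridRect (h : Laminar n₁ n₂ i₀ i₁ j₀ j₁ F) {P : Finset (Fin n₁ × Fin n₂)}
    (hP : P ∈ F) : P ⊆ gridRect n₁ n₂ i₀ i₁ j₀ j₁ :=
  h.biUnion_eq ▸ subset_biUnion_of_mem id hP

theorem pairwiseDisjoint (h : Laminar n₁ n₂ i₀ i₁ j₀ j₁ F) :
    (F : Set (Finset (Fin n₁ × Fin n₂))).PairwiseDisjoint id := by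
  induction h with
  | single => simp
  | vsplit _ _ h₁ h₂ ih₁ ih₂ =>
    rw [coe_union, Set.pairwiseDisjoint_union]
    exact ⟨ih₁, ih₂, fun P hP Q hQ _ => (disjoint_gridRect_of_col_lt (Nat.lt_succ_self _)).mono
      (h₁.subset_gridRect hP) (h₂.subset_gridRect hQ)⟩
  | hsplit _ _ h₁ h₂ ih₁ ih₂ =>
    rw [coe_union, Set.pairwiseDisjoint_union]
    exact ⟨ih₁, ih₂, fun P hP Q hQ _ => (disjoint_gridRect_of_row_lt (Nat.lt_succ_self _)).mono
      (h₁.subset_gridRect hP) (h₂.subset_gridRect hQ)⟩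

theorem isRect (h : Laminar n₁ n₂ i₀ i₁ j₀ j₁ F) : ∀ P ∈ F, IsRect P := by
  induction h with
  | single i₀ i₁ j₀ j₁ => simpa using ⟨i₀, i₁, j₀, j₁, rfl⟩
  | vsplit _ _ _ _ ih₁ ih₂ | hsplit _ _ _ _ ih₁ ih₂ => exact forall_mem_union.2 ⟨ih₁, ih₂⟩

theorem nonempty (h : Laminar n₁ n₂ i₀ i₁ j₀ j₁ F) (hi : i₀ ≤ i₁) (hi₁ : i₁ < n₁) (hj : j₀ ≤ j₁)
    (hj₁ : j₁ < n₂) : ∀ P ∈ F, P.Nonempty := by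
  induction h with
  | single => simpa using gridRect_nonempty hi hi₁ hj hj₁
  | vsplit h₀ h₁ _ _ ih₁ ih₂ =>
    exact forall_mem_union.2 ⟨ih₁ hi hi₁ h₀ (by omega), ih₂ hi hi₁ h₁ hj₁⟩
  | hsplit h₀ h₁ _ _ ih₁ ih₂ =>
    exact forall_mem_union.2 ⟨ih₁ h₀ (by omega) hj hj₁, ih₂ h₁ hi₁ hj hj₁⟩

theorem isTiling (h : Laminar n₁ n₂ 0 (n₁ - 1) 0 (n₂ - 1) F) (hn₁ : 0 < n₁) (hn₂ : 0 < n₂) :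
    IsTiling F := by
  refine ⟨fun P hP => ⟨h.isRect P hP, h.nonempty (Nat.zero_le _) (by omega) (Nat.zero_le _)
    (by omega) P hP⟩, fun P hP Q hQ hPQ => h.pairwiseDisjoint hP hQ hPQ, fun p => ?_⟩
  have hp : p ∈ F.biUnion id := h.biUnion_eq ▸ mem_gridRect.2 (by omega)
  simpa using hp

end Laminar

section Bounds

variable {n₁ n₂ : ℕ} {R : Finset (Fin n₁ × Fin n₂)} {p : Fin n₁ × Fin n₂}

noncomputable def rowMin (R : Finset (Fin n₁ × Fin n₂)) : ℕ :=
  if h : R.Nonempty then R.inf' h fun p => (p.1 : ℕ) else 0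

def rowMax (R : Finset (Fin n₁ × Fin n₂)) : ℕ :=
  R.sup fun p => (p.1 : ℕ)

noncomputable def colMin (R : Finset (Fin n₁ × Fin n₂)) : ℕ :=
  if h : R.Nonempty then R.inf' h fun p => (p.2 : ℕ) else 0

def colMax (R : Finset (Fin n₁ × Fin n₂)) : ℕ :=
  R.sup fun p => (p.2 : ℕ)

theorem bounds_of_mem (hp : p ∈ R) :
    rowMin R ≤ (p.1 : ℕ) ∧ (p.1 : ℕ) ≤ rowMax R ∧ colMin R ≤ (p.2 : ℕ) ∧ (p.2 : ℕ) ≤ colMax R := by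
  have hR : R.Nonempty := ⟨p, hp⟩
  simp only [rowMin, colMin, dif_pos hR]
  exact ⟨inf'_le _ hp, le_sup (f := fun p => (p.1 : ℕ)) hp, inf'_le _ hp,
    le_sup (f := fun p => (p.2 : ℕ)) hp⟩

theorem rowMax_lt (hR : R.Nonempty) : rowMax R < n₁ := by
  obtain ⟨p, -, hp⟩ := exists_mem_eq_sup R hR fun p => (p.1 : ℕ)
  rw [rowMax, hp]
  exact p.1.isLt

theorem colMax_lt (hR : R.Nonempty) : colMax R < n₂ := by
  obtain ⟨p, -, hp⟩ := exists_mem_eq_sup R hR fun p => (p.2 : ℕ)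
  rw [colMax, hp]
  exact p.2.isLt

theorem colMin_lt (hR : R.Nonempty) : colMin R < n₂ := by
  obtain ⟨p, hp⟩ := hR
  exact (bounds_of_mem hp).2.2.1.trans_lt p.2.isLt

theorem IsRect.mem_iff_bounds (hR : IsRect R) (hne : R.Nonempty) :
    p ∈ R ↔ rowMin R ≤ (p.1 : ℕ) ∧ (p.1 : ℕ) ≤ rowMax R ∧
      colMin R ≤ (p.2 : ℕ) ∧ (p.2 : ℕ) ≤ colMax R := by
  refine ⟨bounds_of_mem, fun hq => ?_⟩
  obtain ⟨a, ha, ha'⟩ := exists_mem_eq_inf' hne fun p => (p.1 : ℕ)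
  obtain ⟨b, hb, hb'⟩ := exists_mem_eq_sup R hne fun p => (p.1 : ℕ)
  obtain ⟨c, hc, hc'⟩ := exists_mem_eq_inf' hne fun p => (p.2 : ℕ)
  obtain ⟨d, hd, hd'⟩ := exists_mem_eq_sup R hne fun p => (p.2 : ℕ)
  simp only [rowMin, rowMax, colMin, colMax, dif_pos hne] at hq ha' hb' hc' hd'
  obtain ⟨i₀, i₁, j₀, j₁, rfl⟩ := hR
  rw [mem_gridRect] at ha hb hc hd ⊢
  omega

end Bounds

section Construction

variable {n₁ n₂ : ℕ} {F : Finset (Finset (Fin n₁ × Fin n₂))}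

def SubordinateTo (F' F : Finset (Finset (Fin n₁ × Fin n₂))) : Prop :=
  ∀ P ∈ F', ∃ R ∈ F, P ⊆ R

def SpansColumns (F : Finset (Finset (Fin n₁ × Fin n₂))) (c d : ℕ) : Prop :=
  ∀ R ∈ F, ∀ p ∈ R, c ≤ (p.2 : ℕ) → (p.2 : ℕ) ≤ d → colMin R ≤ c ∧ d ≤ colMax R

theorem spansColumns_of_forall_colMin (hF : IsTiling F) {c d : ℕ} (hd : d < n₂)
    (hcut : ∀ R ∈ F, c < colMin R → d < colMin R) : SpansColumns F c d := by
  intro R hRF p hpR hcp hpd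
  have hR := hF.1 R hRF
  have hp := bounds_of_mem hpR
  refine ⟨Nat.le_of_not_lt fun h => absurd (hcut R hRF h) (by omega), ?_⟩
  by_contra! hshort
  obtain ⟨R', hR'F, hqR'⟩ := hF.2.2 (p.1, ⟨colMax R + 1, by omega⟩)
  have hR' := hF.1 R' hR'F
  have hq := bounds_of_mem hqR'
  simp only at hq
  -- `R'` begins right after `R` ends, otherwise both contain the cell `(p.1, colMax R)`.
  have hnext : colMax R < colMin R' := by
    by_contra! hle
    have hne : R ≠ R' := by
      rintro rfl
      omega
    let r : Fin n₁ × Fin n₂ := (p.1, ⟨colMax R, colMax_lt hR.2⟩)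
    have hrR : r ∈ R := (hR.1.mem_iff_bounds hR.2).2 (by simp only [r]; omega)
    have hrR' : r ∈ R' := (hR'.1.mem_iff_bounds hR'.2).2 (by simp only [r]; omega)
    exact disjoint_left.1 (hF.2.1 R hRF R' hR'F hne) hrR hrR'
  have := hcut R' hR'F (by omega)
  omega

theorem exists_laminar_of_spansColumns (hF : IsTiling F) {c d : ℕ} (hcd : c ≤ d) (hd : d < n₂)
    (hspan : SpansColumns F c d) (a : ℕ) (ha : a < n₁) :
    ∃ F', Laminar n₁ n₂ a (n₁ - 1) c d F' ∧ SubordinateTo F' F ∧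
      F'.card ≤ (F.filter fun R => (R ∩ gridRect n₁ n₂ a (n₁ - 1) c d).Nonempty).card := by
  let p : Fin n₁ × Fin n₂ := (⟨a, ha⟩, ⟨c, by omega⟩)
  obtain ⟨R, hRF, hpR⟩ := hF.2.2 p
  have hR := hF.1 R hRF
  have hpb : rowMin R ≤ a ∧ a ≤ rowMax R ∧ colMin R ≤ c ∧ c ≤ colMax R := bounds_of_mem hpR
  have hRc := hspan R hRF p hpR le_rfl hcd
  have hslab : ∀ b ≤ rowMax R, gridRect n₁ n₂ a b c d ⊆ R := fun b hb q hq => by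
    rw [mem_gridRect] at hq
    exact (hR.1.mem_iff_bounds hR.2).2 (by omega)
  have hRmeets : R ∈ F.filter fun R => (R ∩ gridRect n₁ n₂ a (n₁ - 1) c d).Nonempty :=
    mem_filter.2 ⟨hRF, p, mem_inter.2 ⟨hpR, mem_gridRect.2 (by simp only [p]; omega)⟩⟩
  by_cases hlast : rowMax R = n₁ - 1
  · refine ⟨{gridRect n₁ n₂ a (n₁ - 1) c d}, .single _ _ _ _, ?_, ?_⟩
    · simpa [SubordinateTo] using ⟨R, hRF, hslab _ hlast.ge⟩
    · simpa using card_pos.2 ⟨R, hRmeets⟩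
  have hRlt := rowMax_lt hR.2
  obtain ⟨F₂, hlam, hsub, hcard⟩ :=
    exists_laminar_of_spansColumns hF hcd hd hspan (rowMax R + 1) (by omega)
  refine ⟨{gridRect n₁ n₂ a (rowMax R) c d} ∪ F₂,
    .hsplit hpb.2.1 (by omega) (.single _ _ _ _) hlam, ?_, ?_⟩
  · exact forall_mem_union.2 ⟨by simpa using ⟨R, hRF, hslab _ le_rfl⟩, hsub⟩
  have hfewer : (F.filter fun R' => (R' ∩ gridRect n₁ n₂ (rowMax R + 1) (n₁ - 1) c d).Nonempty) ⊂
      F.filter fun R' => (R' ∩ gridRect n₁ n₂ a (n₁ - 1) c d).Nonempty := by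
    refine (ssubset_iff_of_subset fun R' hR' => ?_).2 ⟨R, hRmeets, fun hR' => ?_⟩
    · obtain ⟨hR'F, q, hq⟩ := mem_filter.1 hR'
      rw [mem_inter, mem_gridRect] at hq
      exact mem_filter.2 ⟨hR'F, q, mem_inter.2 ⟨hq.1, mem_gridRect.2 (by omega)⟩⟩
    · obtain ⟨-, q, hq⟩ := mem_filter.1 hR'
      rw [mem_inter, mem_gridRect] at hq
      have := (bounds_of_mem hq.1).2.1
      omega
  calc ({gridRect n₁ n₂ a (rowMax R) c d} ∪ F₂).card ≤ 1 + F₂.card := by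
        simpa using card_union_le {gridRect n₁ n₂ a (rowMax R) c d} F₂
    _ ≤ _ := by have := card_lt_card hfewer; omega
termination_by n₁ - a
decreasing_by omega

theorem exists_laminar_of_mem_image_colMin (hF : IsTiling F) (hn₁ : 0 < n₁) {c : ℕ}
    (hc : c ∈ F.image colMin) :
    ∃ F', Laminar n₁ n₂ 0 (n₁ - 1) c (n₂ - 1) F' ∧ SubordinateTo F' F ∧
      F'.card ≤ ((F.image colMin).filter (c ≤ ·)).card * F.card := by
  have hcn : c < n₂ := by
    obtain ⟨R, hRF, rfl⟩ := mem_image.1 hc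
    exact colMin_lt (hF.1 R hRF).2
  by_cases hnext : ((F.image colMin).filter (c < ·)).Nonempty
  · obtain ⟨hc'cut, hcc'⟩ := mem_filter.1 (min'_mem _ hnext)
    set c' := ((F.image colMin).filter (c < ·)).min' hnext
    have hc'le : ∀ x ∈ F.image colMin, c < x → c' ≤ x := fun x hx hcx =>
      min'_le _ _ (mem_filter.2 ⟨hx, hcx⟩)
    have hc'n : c' < n₂ := by
      obtain ⟨R, hRF, hR⟩ := mem_image.1 hc'cut
      exact hR ▸ colMin_lt (hF.1 R hRF).2
    have hspan : SpansColumns F c (c' - 1) := spansColumns_of_forall_colMin hF (by omega)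
      fun R hRF hR => by
        have := hc'le _ (mem_image_of_mem colMin hRF) hR
        omega
    obtain ⟨F₁, hlam₁, hsub₁, hcard₁⟩ :=
      exists_laminar_of_spansColumns hF (by omega) (by omega) hspan 0 hn₁
    obtain ⟨F₂, hlam₂, hsub₂, hcard₂⟩ := exists_laminar_of_mem_image_colMin hF hn₁ hc'cut
    have hcuts : (F.image colMin).filter (c ≤ ·) = insert c ((F.image colMin).filter (c' ≤ ·)) := by
      ext x
      simp only [mem_filter, mem_insert]
      constructor
      · rintro ⟨hx, hcx⟩
        exact hcx.eq_or_lt.imp Eq.symm fun hlt => ⟨hx, hc'le x hx hlt⟩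
      · rintro (rfl | ⟨hx, hcx⟩)
        exacts [⟨hc, le_rfl⟩, ⟨hx, by omega⟩]
    refine ⟨F₁ ∪ F₂, .vsplit (j := c' - 1) (by omega) (by omega) hlam₁
      (by rwa [Nat.sub_add_cancel (by omega)]), forall_mem_union.2 ⟨hsub₁, hsub₂⟩, ?_⟩
    rw [hcuts, card_insert_of_notMem fun h => by have := (mem_filter.1 h).2; omega, add_one_mul]
    calc (F₁ ∪ F₂).card ≤ F₁.card + F₂.card := card_union_le _ _
      _ ≤ _ := by linarith [hcard₁.trans (card_filter_le _ _)]
  · have hspan : SpansColumns F c (n₂ - 1) := spansColumns_of_forall_colMin hF (by omega)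
      fun R hRF hR => absurd ⟨colMin R, mem_filter.2 ⟨mem_image_of_mem colMin hRF, hR⟩⟩ hnext
    obtain ⟨F₁, hlam₁, hsub₁, hcard₁⟩ :=
      exists_laminar_of_spansColumns hF (by omega) (by omega) hspan 0 hn₁
    refine ⟨F₁, hlam₁, hsub₁, hcard₁.trans <| (card_filter_le _ _).trans ?_⟩
    exact Nat.le_mul_of_pos_left _ (card_pos.2 ⟨c, mem_filter.2 ⟨hc, le_rfl⟩⟩)
termination_by n₂ - c

theorem SubordinateTo.refines {F' : Finset (Finset (Fin n₁ × Fin n₂))} (hsub : SubordinateTo F' F)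
    (hcover : ∀ p, ∃ P ∈ F', p ∈ P) (hdisj : ∀ R ∈ F, ∀ R' ∈ F, R ≠ R' → Disjoint R R') :
    Refines F' F := by
  intro R hRF
  refine ⟨F'.filter (· ⊆ R), filter_subset _ _, ext fun q => ⟨fun hq => ?_, ?_⟩⟩
  · obtain ⟨P, hPF', hqP⟩ := hcover q
    obtain ⟨R', hR'F, hPR'⟩ := hsub P hPF'
    obtain rfl : R' = R := by_contra fun hne =>
      disjoint_left.1 (hdisj R' hR'F R hRF hne) (hPR' hqP) hq
    exact mem_biUnion.2 ⟨P, mem_filter.2 ⟨hPF', hPR'⟩, hqP⟩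
  · simp only [mem_biUnion, mem_filter, id]
    exact fun ⟨P, ⟨_, hPR⟩, hqP⟩ => hPR hqP

end Construction

theorem stmt17_general {n₁ n₂ : ℕ} (hn₁ : 0 < n₁) (hn₂ : 0 < n₂) (k : ℕ)
    (F : Finset (Finset (Fin n₁ × Fin n₂)))
    (hF : IsTiling F) (hFk : F.card ≤ k) :
    ∃ F' : Finset (Finset (Fin n₁ × Fin n₂)),
      IsTiling F' ∧ Laminar n₁ n₂ 0 (n₁ - 1) 0 (n₂ - 1) F' ∧
      F'.card ≤ k ^ 2 ∧ Refines F' F := by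
  obtain ⟨R₀, hR₀F, hR₀⟩ := hF.2.2 (⟨0, hn₁⟩, ⟨0, hn₂⟩)
  have h₀ : 0 ∈ F.image colMin := mem_image.2 ⟨R₀, hR₀F, Nat.le_zero.1 (bounds_of_mem hR₀).2.2.1⟩
  obtain ⟨F', hlam, hsub, hcard⟩ := exists_laminar_of_mem_image_colMin hF hn₁ h₀
  have hF' := hlam.isTiling hn₁ hn₂
  refine ⟨F', hF', hlam, ?_, hsub.refines hF'.2.2 hF.2.1⟩
  calc F'.card ≤ ((F.image colMin).filter (0 ≤ ·)).card * F.card := hcard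
    _ ≤ F.card * F.card := Nat.mul_le_mul_right _ ((card_filter_le _ _).trans card_image_le)
    _ ≤ k ^ 2 := sq k ▸ Nat.mul_le_mul hFk hFk

/-- every `k`-tiling of the grid admits a laminar refinement
with at most `k²` rectangles. -/
theorem stmt17 {n₁ n₂ : ℕ} (hn₁ : 0 < n₁) (hn₂ : 0 < n₂) (k : ℕ) (hk : 0 < k)
    (F : Finset (Finset (Fin n₁ × Fin n₂)))
    (hF : IsTiling F) (hFk : F.card ≤ k) :
    ∃ F' : Finset (Finset (Fin n₁ × Fin n₂)),
      IsTiling F' ∧ Laminar n₁ n₂ 0 (n₁ - 1) 0 (n₂ - 1) F' ∧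
      F'.card ≤ k ^ 2 ∧ Refines F' F :=
  stmt17_general hn₁ hn₂ k F hF hFk
end
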